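/- arXiv:2209.14132 — 7 statements merged into one kernel-verified Lean document; each statement's English description precedes it below -/
import Mathlib

section
/- Let M and N be finite sets, let K be a nonempty collection of subsets of M, and let f : N → 2^M and g : N → 2^M be maps such that f(i) ∈ K and M − g(i) ∈ K for every i ∈ N. Then the following are equivalent: (a) for every order ideal J of K one has Σ_{T∈J} |f⁻¹(T)| ≤ Σ_{T∈J} |g⁻¹(M−T)|; (b) for every order ideal I of K̄ = {M−T : T ∈ K} one has Σ_{S∈I} |g⁻¹(S)| ≤ Σ_{S∈I} |f⁻¹(M−S)|; (c) there exists a permutation σ of N such that f(i) ∩ g(σ(i)) = ∅ for every i ∈ N. -/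
open Finset

lemma count_sum_aux {M N : Type*} [Fintype M] [DecidableEq M] [Fintype N] [DecidableEq N]
    (h : N → Finset M) (J : Finset (Finset M)) :
    ∑ T ∈ J, (univ.filter fun i => h i = T).card =
      (univ.filter fun i => h i ∈ J).card := by
  rw [Finset.card_eq_sum_card_fiberwise (f := h) (t := J) (by intro i hi; simpa using hi)]
  apply Finset.sum_congr rfl
  intro T hT
  congr 1
  ext i
  simp only [Finset.mem_filter, Finset.mem_univ, true_and]
  exact ⟨fun h' => ⟨by rw [h']; exact hT, h'⟩, fun h' => h'.2⟩

lemma count_sum_compl_aux {M N : Type*} [Fintype M] [DecidableEq M] [Fintype N] [DecidableEq N]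
    (h : N → Finset M) (J : Finset (Finset M)) :
    ∑ T ∈ J, (univ.filter fun i => h i = Tᶜ).card =
      (univ.filter fun i => (h i)ᶜ ∈ J).card := by
  rw [← count_sum_aux (fun i => (h i)ᶜ) J]
  apply Finset.sum_congr rfl
  intro T _
  congr 1
  ext i
  simp only [Finset.mem_filter, Finset.mem_univ, true_and]
  constructor
  · intro h'; rw [h']; simp
  · intro h'; rw [← h', compl_compl]

lemma card_filter_not_aux {N : Type*} [Fintype N] (p : N → Prop) [DecidablePred p] :
    (univ.filter fun i => ¬ p i).card = Fintype.card N - (univ.filter p).card := by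
  have := Finset.card_filter_add_card_filter_not (s := (univ : Finset N)) (p := p)
  simp only [Finset.card_univ] at this
  omega

/-- **Avoidance up to symmetry.**  Let `M` and `N` be finite sets, `K` a nonempty family of
subsets of `M`, and `f g : N → 2^M` maps with `f i ∈ K` and `M − g i ∈ K` for all `i`.
Then conditions (a), (b), (c) are equivalent. -/
theorem avoidance_up_to_symmetry
    {M N : Type*} [Fintype M] [DecidableEq M] [Fintype N] [DecidableEq N]
    (K : Finset (Finset M)) (hK : K.Nonempty)
    (f g : N → Finset M)
    (hf : ∀ i, f i ∈ K) (hg : ∀ i, (g i)ᶜ ∈ K) :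
    ((∀ J ⊆ K, (∀ T ∈ J, ∀ S ∈ K, T ⊆ S → S ∈ J) →
        ∑ T ∈ J, (univ.filter fun i => f i = T).card ≤
          ∑ T ∈ J, (univ.filter fun i => g i = Tᶜ).card) ↔
      (∀ I ⊆ K.image (fun T => Tᶜ),
        (∀ T ∈ I, ∀ S ∈ K.image (fun T => Tᶜ), T ⊆ S → S ∈ I) →
        ∑ S ∈ I, (univ.filter fun i => g i = S).card ≤
          ∑ S ∈ I, (univ.filter fun i => f i = Sᶜ).card)) ∧
    ((∀ J ⊆ K, (∀ T ∈ J, ∀ S ∈ K, T ⊆ S → S ∈ J) →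
        ∑ T ∈ J, (univ.filter fun i => f i = T).card ≤
          ∑ T ∈ J, (univ.filter fun i => g i = Tᶜ).card) ↔
      (∃ σ : Equiv.Perm N, ∀ i, f i ∩ g (σ i) = ∅)) := by
  simp only [count_sum_aux, count_sum_compl_aux]
  constructor
  · -- (a) ↔ (b)
    constructor
    · -- (a) → (b)
      intro ha I hIsub hIideal
      set J : Finset (Finset M) := K.filter (fun T => Tᶜ ∉ I) with hJ
      have hJsub : J ⊆ K := Finset.filter_subset _ _
      have hJideal : ∀ T ∈ J, ∀ S ∈ K, T ⊆ S → S ∈ J := by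
        intro T hT S hS hTS
        rw [hJ, Finset.mem_filter] at hT ⊢
        refine ⟨hS, fun hSc => hT.2 ?_⟩
        exact hIideal _ hSc _ (Finset.mem_image_of_mem _ hT.1)
          (Finset.compl_subset_compl.2 hTS)
      have key := ha J hJsub hJideal
      have h1 : (univ.filter fun i => f i ∈ J) = (univ.filter fun i => ¬ (f i)ᶜ ∈ I) := by
        ext i; simp [hJ, hf i]
      have h2 : (univ.filter fun i => (g i)ᶜ ∈ J) = (univ.filter fun i => ¬ g i ∈ I) := by
        ext i; simp [hJ, hg i]
      rw [h1, h2, card_filter_not_aux, card_filter_not_aux] at key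
      have c1 : (univ.filter fun i => (f i)ᶜ ∈ I).card ≤ Fintype.card N :=
        le_trans (Finset.card_le_card (Finset.filter_subset _ _)) (le_of_eq (Finset.card_univ))
      have c2 : (univ.filter fun i => g i ∈ I).card ≤ Fintype.card N :=
        le_trans (Finset.card_le_card (Finset.filter_subset _ _)) (le_of_eq (Finset.card_univ))
      omega
    · -- (b) → (a)
      intro hb J hJsub hJideal
      set I : Finset (Finset M) := (K.image fun T => Tᶜ).filter (fun S => Sᶜ ∉ J) with hI
      have hIsub : I ⊆ K.image fun T => Tᶜ := Finset.filter_subset _ _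
      have hIideal : ∀ T ∈ I, ∀ S ∈ K.image fun T => Tᶜ, T ⊆ S → S ∈ I := by
        intro T hT S hS hTS
        rw [hI, Finset.mem_filter] at hT ⊢
        refine ⟨hS, fun hSc => hT.2 ?_⟩
        obtain ⟨T', hT', rfl⟩ := Finset.mem_image.1 hT.1
        apply hJideal _ hSc
        · simpa using hT'
        · simpa using Finset.compl_subset_compl.2 hTS
      have key := hb I hIsub hIideal
      have h1 : (univ.filter fun i => g i ∈ I) = (univ.filter fun i => ¬ (g i)ᶜ ∈ J) := by
        ext i
        simp only [Finset.mem_filter, Finset.mem_univ, true_and, hI]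
        constructor
        · rintro ⟨_, h2⟩; simpa using h2
        · intro h'
          refine ⟨Finset.mem_image.2 ⟨(g i)ᶜ, hg i, by simp⟩, by simpa using h'⟩
      have h2 : (univ.filter fun i => (f i)ᶜ ∈ I) = (univ.filter fun i => ¬ f i ∈ J) := by
        ext i
        simp only [Finset.mem_filter, Finset.mem_univ, true_and, hI]
        constructor
        · rintro ⟨_, h2⟩; simpa using h2
        · intro h'
          refine ⟨Finset.mem_image.2 ⟨f i, hf i, rfl⟩, by simpa using h'⟩
      rw [h1, h2, card_filter_not_aux, card_filter_not_aux] at key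
      have c1 : (univ.filter fun i => f i ∈ J).card ≤ Fintype.card N :=
        le_trans (Finset.card_le_card (Finset.filter_subset _ _)) (le_of_eq (Finset.card_univ))
      have c2 : (univ.filter fun i => (g i)ᶜ ∈ J).card ≤ Fintype.card N :=
        le_trans (Finset.card_le_card (Finset.filter_subset _ _)) (le_of_eq (Finset.card_univ))
      omega
  · -- (a) ↔ (c)
    constructor
    · -- (a) → (c): Hall's theorem
      intro ha
      set t : N → Finset N := fun i => univ.filter (fun j => f i ∩ g j = ∅) with ht
      have hall : ∀ A : Finset N, A.card ≤ (A.biUnion t).card := by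
        intro A
        set J : Finset (Finset M) := K.filter (fun S => ∃ i ∈ A, f i ⊆ S) with hJ
        have hJsub : J ⊆ K := Finset.filter_subset _ _
        have hJideal : ∀ T ∈ J, ∀ S ∈ K, T ⊆ S → S ∈ J := by
          intro T hT S hS hTS
          rw [hJ, Finset.mem_filter] at hT ⊢
          obtain ⟨i, hi, hfi⟩ := hT.2
          exact ⟨hS, i, hi, hfi.trans hTS⟩
        have key := ha J hJsub hJideal
        have hA : A.card ≤ (univ.filter fun i => f i ∈ J).card := by
          apply Finset.card_le_card
          intro i hi
          simp only [Finset.mem_filter, Finset.mem_univ, true_and, hJ]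
          exact ⟨hf i, i, hi, subset_rfl⟩
        have hB : (univ.filter fun i => (g i)ᶜ ∈ J) ⊆ A.biUnion t := by
          intro j hj
          simp only [Finset.mem_filter, Finset.mem_univ, true_and] at hj
          rw [hJ, Finset.mem_filter] at hj
          obtain ⟨-, i, hi, hfi⟩ := hj
          apply Finset.mem_biUnion.2 ⟨i, hi, ?_⟩
          simp only [ht, Finset.mem_filter, Finset.mem_univ, true_and]
          exact Finset.disjoint_iff_inter_eq_empty.1 (le_compl_iff_disjoint_right.1 hfi)
        exact le_trans hA (le_trans key (Finset.card_le_card hB))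
      obtain ⟨σ, hσinj, hσ⟩ := (Finset.all_card_le_biUnion_card_iff_exists_injective t).1 hall
      have hbij : Function.Bijective σ := Finite.injective_iff_bijective.1 hσinj
      refine ⟨Equiv.ofBijective σ hbij, fun i => ?_⟩
      have := hσ i
      simpa [ht, Finset.mem_filter] using this
    · -- (c) → (a)
      rintro ⟨σ, hσ⟩ J hJsub hJideal
      apply Finset.card_le_card_of_injOn σ
      · intro i hi
        simp only [Finset.mem_coe, Finset.mem_filter, Finset.mem_univ, true_and] at hi ⊢
        apply hJideal _ hi _ (hg (σ i))
        exact le_compl_iff_disjoint_right.2 (Finset.disjoint_iff_inter_eq_empty.2 (hσ i))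
      · exact Function.Injective.injOn σ.injective
end

section
/- Fix positive integers c, n and a field k. Let I_n ⊆ R_n be a Sym(n)-invariant squarefree monomial ideal and let I_{n+1} ⊆ R_{n+1} be the ideal generated by {σ·f : f ∈ I_n, σ ∈ Sym(n+1)}, where R_n is regarded as a subring of R_{n+1}. Then every squarefree monomial m of R_n with m ∉ I_n satisfies m ∉ I_{n+1}. In particular, the Stanley-Reisner complex Δ(I_n) is a subcomplex of Δ(I_{n+1}). -/
open MvPolynomial Finset

private lemma prodX_eq_monomial' {τ R : Type*} [CommSemiring R] [DecidableEq τ] (F : Finset τ) :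
    (∏ v ∈ F, (X v : MvPolynomial τ R)) =
      monomial (∑ v ∈ F, Finsupp.single v 1) 1 := by
  induction F using Finset.induction with
  | empty => simp
  | insert _ _ h ih =>
      rw [Finset.prod_insert h, Finset.sum_insert h, ih, X, monomial_mul, one_mul]

private lemma sum_single_apply' {τ : Type*} [DecidableEq τ] (F : Finset τ) (w : τ) :
    (∑ v ∈ F, Finsupp.single v 1 : τ →₀ ℕ) w = if w ∈ F then 1 else 0 := by
  rw [Finsupp.finset_sum_apply]
  simp [Finsupp.single_apply]

private noncomputable def restrictPerm {n : ℕ} (σ : Equiv.Perm (Fin (n + 1)))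
    (h : σ (Fin.last n) = Fin.last n) : Equiv.Perm (Fin n) :=
  Equiv.ofBijective
    (fun j => (σ j.castSucc).castPred (fun he =>
      (Fin.castSucc_lt_last j).ne (σ.injective (he.trans h.symm))))
    (Finite.injective_iff_bijective.mp (fun a b hab => by
      have h2 := congrArg Fin.castSucc hab
      simp only [Fin.castSucc_castPred] at h2
      exact Fin.castSucc_injective n (σ.injective h2)))

private lemma restrictPerm_castSucc {n : ℕ} (σ : Equiv.Perm (Fin (n + 1)))
    (h : σ (Fin.last n) = Fin.last n) (j : Fin n) :
    Fin.castSucc (restrictPerm σ h j) = σ j.castSucc := by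
  simp [restrictPerm, Fin.castSucc_castPred]

/-- Let `I ⊆ R_n` be a `Sym(n)`-invariant squarefree monomial ideal and let
`I' ⊆ R_{n+1}` be the ideal generated by `{σ·f : f ∈ I, σ ∈ Sym(n+1)}`, where `R_n` is
regarded as a subring of `R_{n+1}` (via `Fin.castSucc`).  Then every squarefree monomial
`x^F` of `R_n` with `x^F ∉ I` satisfies `x^F ∉ I'`; in particular the Stanley–Reisner
complex `Δ(I)` is a subcomplex of `Δ(I')`. -/
theorem not_mem_extended_orbit_ideal
    {c n : ℕ} (hc : 0 < c) (hn : 0 < n) (K : Type*) [Field K]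
    (I : Ideal (MvPolynomial (Fin c × Fin n) K))
    (hsf : ∃ 𝒜 : Set (Finset (Fin c × Fin n)),
      I = Ideal.span {p | ∃ F ∈ 𝒜, p = ∏ v ∈ F, (X v : MvPolynomial (Fin c × Fin n) K)})
    (hinv : ∀ p ∈ I, ∀ σ : Equiv.Perm (Fin n),
      rename (fun v : Fin c × Fin n => (v.1, σ v.2)) p ∈ I)
    (F : Finset (Fin c × Fin n))
    (hF : (∏ v ∈ F, (X v : MvPolynomial (Fin c × Fin n) K)) ∉ I) :
    rename (fun v : Fin c × Fin n => (v.1, Fin.castSucc v.2))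
        (∏ v ∈ F, (X v : MvPolynomial (Fin c × Fin n) K)) ∉
      Ideal.span {q : MvPolynomial (Fin c × Fin (n + 1)) K |
        ∃ p ∈ I, ∃ σ : Equiv.Perm (Fin (n + 1)),
          q = rename (fun v : Fin c × Fin (n + 1) => (v.1, σ v.2))
                (rename (fun v : Fin c × Fin n => (v.1, Fin.castSucc v.2)) p)} := by
  classical
  obtain ⟨𝒜, h𝒜⟩ := hsf
  intro hmem
  apply hF
  set ι : Fin c × Fin n → Fin c × Fin (n + 1) := fun v => (v.1, Fin.castSucc v.2) with hι
  have hιinj : Function.Injective ι := fun a b hab => by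
    obtain ⟨h1, h2⟩ := Prod.mk.injEq _ _ _ _ ▸ hab
    exact Prod.ext h1 (Fin.castSucc_injective n h2)
  set S : Set ((Fin c × Fin (n + 1)) →₀ ℕ) :=
    {s | ∃ G ∈ 𝒜, ∃ σ : Equiv.Perm (Fin (n + 1)),
      s = ∑ w ∈ G.image (fun v : Fin c × Fin n => (v.1, σ v.2.castSucc)),
        Finsupp.single w 1} with hS
  -- the orbit ideal is contained in a monomial ideal
  have hle : Ideal.span {q : MvPolynomial (Fin c × Fin (n + 1)) K |
        ∃ p ∈ I, ∃ σ : Equiv.Perm (Fin (n + 1)),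
          q = rename (fun v : Fin c × Fin (n + 1) => (v.1, σ v.2))
                (rename (fun v : Fin c × Fin n => (v.1, Fin.castSucc v.2)) p)} ≤
      Ideal.span ((fun s => monomial s (1 : K)) '' S) := by
    rw [Ideal.span_le]
    rintro q ⟨p, hp, σ, rfl⟩
    have hgi : Function.Injective
        (fun v : Fin c × Fin n => (v.1, σ v.2.castSucc)) := fun a b hab => by
      obtain ⟨h1, h2⟩ := Prod.mk.injEq _ _ _ _ ▸ hab
      exact Prod.ext h1 (Fin.castSucc_injective n (σ.injective h2))
    have hren : rename (fun v : Fin c × Fin (n + 1) => (v.1, σ v.2))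
          (rename (fun v : Fin c × Fin n => (v.1, Fin.castSucc v.2)) p)
        = rename (fun v : Fin c × Fin n => (v.1, σ v.2.castSucc)) p := by
      rw [rename_rename]; rfl
    rw [hren]
    have h1 : rename (fun v : Fin c × Fin n => (v.1, σ v.2.castSucc)) p ∈
        Ideal.map (rename (fun v : Fin c × Fin n => (v.1, σ v.2.castSucc)) :
          MvPolynomial (Fin c × Fin n) K →ₐ[K] MvPolynomial (Fin c × Fin (n + 1)) K) I :=
      Ideal.mem_map_of_mem _ hp
    rw [h𝒜, Ideal.map_span] at h1
    refine Ideal.span_le.mpr ?_ h1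
    rintro _ ⟨_, ⟨G, hG, rfl⟩, rfl⟩
    refine Ideal.subset_span ⟨∑ w ∈ G.image (fun v : Fin c × Fin n => (v.1, σ v.2.castSucc)),
      Finsupp.single w 1, ⟨G, hG, σ, rfl⟩, ?_⟩
    rw [map_prod]
    simp only [rename_X]
    rw [← Finset.prod_image (fun a ha b hb hab => hgi hab), prodX_eq_monomial']
  have hmem' := hle hmem
  -- rewrite the renamed monomial
  have hflip : rename ι (∏ v ∈ F, (X v : MvPolynomial (Fin c × Fin n) K)) =
      monomial (∑ w ∈ F.image ι, Finsupp.single w 1) 1 := by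
    rw [map_prod]
    simp only [rename_X]
    rw [← Finset.prod_image (fun a ha b hb hab => hιinj hab), prodX_eq_monomial']
  rw [hflip] at hmem'
  rw [mem_ideal_span_monomial_image] at hmem'
  obtain ⟨s, ⟨G, hG, σ, rfl⟩, hsle⟩ := hmem' (∑ w ∈ F.image ι, Finsupp.single w 1)
    (by simp [support_monomial])
  -- extract the combinatorial containment
  have hsub : ∀ v ∈ G, (v.1, σ v.2.castSucc) ∈ F.image ι := by
    intro v hv
    have h1 := Finsupp.le_def.mp hsle (v.1, σ v.2.castSucc)
    rw [sum_single_apply', sum_single_apply'] at h1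
    rw [if_pos (Finset.mem_image_of_mem _ hv)] at h1
    by_contra hcon
    rw [if_neg hcon] at h1
    omega
  -- build the permutation of Fin n
  set σ' : Equiv.Perm (Fin (n + 1)) := σ.trans (Equiv.swap (σ (Fin.last n)) (Fin.last n))
    with hσ'
  have hfix : σ' (Fin.last n) = Fin.last n := by
    simp [hσ', Equiv.swap_apply_left]
  set τ : Equiv.Perm (Fin n) := restrictPerm σ' hfix with hτ
  have hkey : ∀ v ∈ G, ((v.1, τ v.2) : Fin c × Fin n) ∈ F := by
    intro v hv
    obtain ⟨w, hwF, hw⟩ := Finset.mem_image.mp (hsub v hv)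
    have hw1 : w.1 = v.1 := (Prod.ext_iff.mp hw).1
    have hw2 : Fin.castSucc w.2 = σ v.2.castSucc := (Prod.ext_iff.mp hw).2
    have h2 : σ v.2.castSucc ≠ Fin.last n := by
      rw [← hw2]; exact (Fin.castSucc_lt_last w.2).ne
    have h3 : σ v.2.castSucc ≠ σ (Fin.last n) := fun h =>
      (Fin.castSucc_lt_last v.2).ne (σ.injective h)
    have h4 : σ' v.2.castSucc = σ v.2.castSucc := by
      simp [hσ', Equiv.swap_apply_of_ne_of_ne h3 h2]
    have h5 : Fin.castSucc (τ v.2) = Fin.castSucc w.2 := by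
      rw [hτ, restrictPerm_castSucc, h4, hw2]
    have h6 : τ v.2 = w.2 := Fin.castSucc_injective n h5
    have : ((v.1, τ v.2) : Fin c × Fin n) = w := Prod.ext hw1.symm h6
    rw [this]; exact hwF
  -- conclude
  set t : Fin c × Fin n → Fin c × Fin n := fun v => (v.1, τ v.2) with ht
  have htinj : Function.Injective t := fun a b hab => by
    obtain ⟨h1, h2⟩ := Prod.mk.injEq _ _ _ _ ▸ hab
    exact Prod.ext h1 (τ.injective h2)
  have hGI : (∏ v ∈ G, (X v : MvPolynomial (Fin c × Fin n) K)) ∈ I := by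
    rw [h𝒜]; exact Ideal.subset_span ⟨G, hG, rfl⟩
  have hτI : rename t (∏ v ∈ G, (X v : MvPolynomial (Fin c × Fin n) K)) ∈ I :=
    hinv _ hGI τ
  have hren2 : rename t (∏ v ∈ G, (X v : MvPolynomial (Fin c × Fin n) K)) =
      ∏ w ∈ G.image t, (X w : MvPolynomial (Fin c × Fin n) K) := by
    rw [map_prod]
    simp only [rename_X]
    rw [Finset.prod_image (fun a ha b hb hab => htinj hab)]
  have hsubset : G.image t ⊆ F := by
    intro w hw
    obtain ⟨v, hv, rfl⟩ := Finset.mem_image.mp hw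
    exact hkey v hv
  have hsplit : (∏ v ∈ F, (X v : MvPolynomial (Fin c × Fin n) K)) =
      (∏ v ∈ F \ G.image t, (X v : MvPolynomial (Fin c × Fin n) K)) *
        ∏ w ∈ G.image t, (X w : MvPolynomial (Fin c × Fin n) K) :=
    (Finset.prod_sdiff hsubset).symm
  rw [hsplit]
  exact Ideal.mul_mem_left _ _ (hren2 ▸ hτI)
end

section
/- Let (Δ_n)_{n∈ℕ} be a Sym-invariant chain of simplicial complexes, where Δ_n has vertex set V_n = [c]×[n]. Then there exists an integer n₀ such that for every n ≥ n₀ one has Δ_{n+1} = {σ(F ∪ G) : F ∈ Δ_n, G ⊆ V_{n+1} − V_n, σ ∈ Sym(n+1)}; that is, the Sym(n+1)-orbit of the c-fold cone over Δ_n with apices V_{n+1} − V_n equals Δ_{n+1}. -/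
open Finset


section cntlayer
variable {α : Type*} [DecidableEq α]

/-- number of positions where `γ` takes the value `a` -/
def cntf {n : ℕ} (γ : Fin n → α) (a : α) : ℕ := (univ.filter fun j => γ j = a).card

lemma cntf_eq_sum {n : ℕ} (γ : Fin n → α) (a : α) :
    cntf γ a = ∑ j, if γ j = a then 1 else 0 := by
  unfold cntf; exact Finset.card_filter _ _

lemma sum_cntf [Fintype α] {n : ℕ} (γ : Fin n → α) : ∑ a, cntf γ a = n := by
  have := Finset.card_eq_sum_card_fiberwise (f := γ) (s := univ) (t := univ)
    (fun x _ => mem_univ _)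
  simpa [cntf] using this.symm

lemma cntf_exists_perm {n : ℕ} {γ γ' : Fin n → α} (h : ∀ a, cntf γ a = cntf γ' a) :
    ∃ σ : Equiv.Perm (Fin n), ∀ j, γ' (σ j) = γ j := by
  have e : ∀ a : α, {j : Fin n // γ j = a} ≃ {j : Fin n // γ' j = a} := by
    intro a
    apply Fintype.equivOfCardEq
    rw [Fintype.card_subtype, Fintype.card_subtype]
    exact h a
  refine ⟨((Equiv.sigmaFiberEquiv γ).symm.trans (Equiv.sigmaCongrRight e)).trans
    (Equiv.sigmaFiberEquiv γ'), fun j => ?_⟩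
  exact ((e (γ j)) ⟨j, rfl⟩).2

lemma cntf_snoc {n : ℕ} (γ : Fin n → α) (a b : α) :
    cntf (Fin.snoc γ a : Fin (n+1) → α) b = cntf γ b + if b = a then 1 else 0 := by
  rw [cntf_eq_sum, cntf_eq_sum, Fin.sum_univ_castSucc]
  simp only [Fin.snoc_castSucc, Fin.snoc_last]
  congr 1
  by_cases hab : a = b <;> simp [hab, eq_comm]

lemma cntf_update {n : ℕ} {γ : Fin n → α} {j₀ : Fin n} {a : α} (h : γ j₀ = a) (b : α) (t : α) :
    cntf (Function.update γ j₀ b) t + (if t = a then 1 else 0)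
      = cntf γ t + (if t = b then 1 else 0) := by
  rw [cntf_eq_sum, cntf_eq_sum, ← Finset.add_sum_erase _ _ (mem_univ j₀),
    ← Finset.add_sum_erase _ _ (mem_univ j₀)]
  have h1 : ∀ j ∈ univ.erase j₀, (if Function.update γ j₀ b j = t then 1 else 0)
      = if γ j = t then (1:ℕ) else 0 := by
    intro j hj
    rw [Function.update_of_ne (Finset.ne_of_mem_erase hj)]
  rw [Finset.sum_congr rfl h1, Function.update_self, h]
  have : ∀ x y : α, (if x = y then (1:ℕ) else 0) = if y = x then 1 else 0 := by
    intro x y; by_cases h : x = y <;> simp [h, eq_comm]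
  rw [this b t, this a t]
  omega

lemma exists_cntf [Fintype α] : ∀ {n : ℕ} (N : α → ℕ), ∑ a, N a = n →
    ∃ γ : Fin n → α, ∀ a, cntf γ a = N a := by
  intro n
  induction n with
  | zero =>
    intro N hN
    refine ⟨Fin.elim0, fun a => ?_⟩
    have : N a = 0 := by
      by_contra h
      have : 0 < ∑ a, N a := Finset.sum_pos' (fun _ _ => Nat.zero_le _)
        ⟨a, mem_univ a, Nat.pos_of_ne_zero h⟩
      omega
    simp [cntf, this]
  | succ n ih =>
    intro N hN
    have hex : ∃ a, 0 < N a := by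
      by_contra h
      push_neg at h
      have : ∑ a, N a = 0 := Finset.sum_eq_zero (fun a _ => by have := h a; omega)
      omega
    obtain ⟨a, ha⟩ := hex
    have hsum : ∑ t, Function.update N a (N a - 1) t = n := by
      rw [Finset.sum_update_of_mem (mem_univ a), Finset.sdiff_singleton_eq_erase]
      rw [← Finset.add_sum_erase _ _ (mem_univ a)] at hN
      omega
    obtain ⟨γ', hγ'⟩ := ih _ hsum
    refine ⟨Fin.snoc γ' a, fun b => ?_⟩
    rw [cntf_snoc, hγ' b]
    by_cases hb : b = a
    · subst hb; rw [Function.update_self]; simp; omega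
    · rw [Function.update_of_ne hb]; simp [hb]

end cntlayer


section facelayer
variable {c n : ℕ}

def colF (F : Finset (Fin c × Fin n)) (j : Fin n) : Finset (Fin c) :=
  univ.filter fun i => (i, j) ∈ F

lemma mem_colF {F : Finset (Fin c × Fin n)} {i : Fin c} {j : Fin n} :
    i ∈ colF F j ↔ (i, j) ∈ F := by simp [colF]

lemma colF_inj {F F' : Finset (Fin c × Fin n)} (h : ∀ j, colF F j = colF F' j) : F = F' := by
  ext ⟨i, j⟩
  rw [← mem_colF, ← mem_colF, h]

def faceF (γ : Fin n → Finset (Fin c)) : Finset (Fin c × Fin n) :=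
  univ.filter fun v => v.1 ∈ γ v.2

lemma mem_faceF {γ : Fin n → Finset (Fin c)} {v : Fin c × Fin n} :
    v ∈ faceF γ ↔ v.1 ∈ γ v.2 := by simp [faceF]

lemma colF_faceF (γ : Fin n → Finset (Fin c)) : colF (faceF γ) = γ := by
  funext j; ext i; simp [colF, faceF]

lemma faceF_colF (F : Finset (Fin c × Fin n)) : faceF (colF F) = F := by
  ext ⟨i, j⟩; simp [colF, faceF]

lemma faceF_mono {γ γ' : Fin n → Finset (Fin c)} (h : ∀ j, γ j ⊆ γ' j) :
    faceF γ ⊆ faceF γ' := by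
  intro v hv
  rw [mem_faceF] at hv ⊢
  exact h _ hv

lemma colF_image_perm (F : Finset (Fin c × Fin n)) (σ : Equiv.Perm (Fin n)) (j : Fin n) :
    colF (F.image fun v => (v.1, σ v.2)) j = colF F (σ.symm j) := by
  ext i
  simp only [mem_colF, Finset.mem_image]
  constructor
  · rintro ⟨⟨i', j'⟩, hv, heq⟩
    obtain ⟨h1, h2⟩ := Prod.mk.injEq .. ▸ heq
    simp only [Prod.mk.injEq] at heq
    obtain ⟨rfl, rfl⟩ := heq
    simpa using hv
  · intro hv
    exact ⟨(i, σ.symm j), hv, by simp⟩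

lemma image_perm_eq {F H : Finset (Fin c × Fin n)} {σ : Equiv.Perm (Fin n)}
    (h : ∀ j, colF H (σ j) = colF F j) :
    F.image (fun v => (v.1, σ v.2)) = H := by
  apply colF_inj
  intro j
  rw [colF_image_perm]
  rw [← h (σ.symm j), Equiv.apply_symm_apply]

lemma colF_cone (F : Finset (Fin c × Fin n)) (s : Finset (Fin c)) :
    colF ((F.image fun v => (v.1, Fin.castSucc v.2)) ∪ s ×ˢ {Fin.last n})
      = Fin.snoc (colF F) s := by
  funext j
  refine Fin.lastCases ?_ ?_ j
  · ext i
    simp only [mem_colF, Finset.mem_union, Finset.mem_image, Finset.mem_product,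
      Finset.mem_singleton, Fin.snoc_last]
    constructor
    · rintro (⟨⟨i', j'⟩, _, heq⟩ | ⟨h1, _⟩)
      · simp only [Prod.mk.injEq] at heq
        exact absurd heq.2 (Fin.castSucc_lt_last j').ne
      · exact h1
    · intro hi; exact Or.inr ⟨hi, trivial⟩
  · intro j'
    ext i
    simp only [mem_colF, Finset.mem_union, Finset.mem_image, Finset.mem_product,
      Finset.mem_singleton, Fin.snoc_castSucc]
    constructor
    · rintro (⟨⟨i'', j''⟩, hv, heq⟩ | ⟨_, h2⟩)
      · simp only [Prod.mk.injEq] at heq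
        obtain ⟨rfl, h2⟩ := heq
        rwa [Fin.castSucc_inj.mp h2] at hv
      · exact absurd h2 (Fin.castSucc_lt_last j').ne
    · intro hv
      exact Or.inl ⟨(i, j'), hv, rfl⟩

end facelayer

section qlayer
variable {c : ℕ} {Δ : ∀ n : ℕ, Set (Finset (Fin c × Fin n))}

def cntF {c n : ℕ} (F : Finset (Fin c × Fin n)) : Finset (Fin c) → ℕ :=
  cntf (colF F)

def QQ {c : ℕ} (Δ : ∀ n : ℕ, Set (Finset (Fin c × Fin n)))
    (N : Finset (Fin c) → ℕ) : Prop :=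
  ∃ F : Finset (Fin c × Fin (∑ a, N a)), cntF F = N ∧ F ∈ Δ (∑ a, N a)

def dd {c : ℕ} (a : Finset (Fin c)) : Finset (Fin c) → ℕ := fun t => if t = a then 1 else 0

def padd {c : ℕ} (N : Finset (Fin c) → ℕ) (k : ℕ) : Finset (Fin c) → ℕ :=
  fun t => N t + if t = (∅ : Finset (Fin c)) then k else 0

lemma sum_dd (a : Finset (Fin c)) : ∑ t, dd a t = 1 := by simp [dd]

lemma sum_padd (N : Finset (Fin c) → ℕ) (k : ℕ) :
    ∑ t, padd N k t = (∑ t, N t) + k := by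
  simp [padd, Finset.sum_add_distrib]

lemma padd_succ (N : Finset (Fin c) → ℕ) (k : ℕ) :
    padd N (k+1) = fun t => padd N k t + dd ∅ t := by
  funext t; simp only [padd, dd]; split <;> omega

lemma Qintro {N : Finset (Fin c) → ℕ} {n : ℕ} (h : ∑ a, N a = n)
    (H : Finset (Fin c × Fin n)) (h1 : cntF H = N) (h2 : H ∈ Δ n) : QQ Δ N := by
  subst h; exact ⟨H, h1, h2⟩

lemma Qelim' {N : Finset (Fin c) → ℕ} {n : ℕ} (hQ : QQ Δ N) (h : ∑ a, N a = n) :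
    ∃ F : Finset (Fin c × Fin n), cntF F = N ∧ F ∈ Δ n := by
  subst h; exact hQ

lemma perm_mem
    (hchain1 : ∀ m n : ℕ, ∀ h : m ≤ n, ∀ F ∈ Δ m, ∀ σ : Equiv.Perm (Fin n),
      (F.image (fun v : Fin c × Fin m => (v.1, Fin.castLE h v.2))).image
          (fun v : Fin c × Fin n => (v.1, σ v.2)) ∈ Δ n)
    {n : ℕ} {F : Finset (Fin c × Fin n)} (hF : F ∈ Δ n) (σ : Equiv.Perm (Fin n)) :
    F.image (fun v => (v.1, σ v.2)) ∈ Δ n := by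
  have h := hchain1 n n le_rfl F hF σ
  have he : F.image (fun v : Fin c × Fin n => (v.1, Fin.castLE le_rfl v.2)) = F := by
    simp
  rwa [he] at h

lemma Qelim
    (hchain1 : ∀ m n : ℕ, ∀ h : m ≤ n, ∀ F ∈ Δ m, ∀ σ : Equiv.Perm (Fin n),
      (F.image (fun v : Fin c × Fin m => (v.1, Fin.castLE h v.2))).image
          (fun v : Fin c × Fin n => (v.1, σ v.2)) ∈ Δ n)
    {N : Finset (Fin c) → ℕ} (hQ : QQ Δ N) {n : ℕ} (hn : ∑ a, N a = n)
    (H : Finset (Fin c × Fin n)) (hH : cntF H = N) : H ∈ Δ n := by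
  obtain ⟨F, hF1, hF2⟩ := Qelim' hQ hn
  obtain ⟨σ, hσ⟩ := cntf_exists_perm (γ := colF F) (γ' := colF H)
    (fun a => by rw [show cntf (colF F) a = cntF F a from rfl, hF1,
      show cntf (colF H) a = cntF H a from rfl, hH])
  rw [← image_perm_eq hσ]
  exact perm_mem hchain1 hF2 σ

lemma cntF_cone {n : ℕ} (F : Finset (Fin c × Fin n)) (s : Finset (Fin c)) :
    cntF ((F.image fun v => (v.1, Fin.castSucc v.2)) ∪ s ×ˢ {Fin.last n})
      = fun t => cntF F t + dd s t := by
  funext t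
  show cntf (colF _) t = _
  rw [colF_cone, cntf_snoc]
  rfl

lemma Qstep
    (hchain2 : ∀ n, ∀ F ∈ Δ n, ∀ G : Finset (Fin c × Fin (n + 1)),
      (∀ v ∈ G, (v.2 : ℕ) = n) →
      F.image (fun v : Fin c × Fin n => (v.1, Fin.castSucc v.2)) ∪ G ∈ Δ (n + 1))
    {N : Finset (Fin c) → ℕ} (hQ : QQ Δ N) (s : Finset (Fin c)) :
    QQ Δ (fun t => N t + dd s t) := by
  obtain ⟨F, hF1, hF2⟩ := hQ
  have hG : ∀ v ∈ (s ×ˢ {Fin.last (∑ a, N a)} : Finset (Fin c × Fin ((∑ a, N a)+1))),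
      (v.2 : ℕ) = (∑ a, N a) := by
    intro v hv
    rw [Finset.mem_product, Finset.mem_singleton] at hv
    rw [hv.2]
    exact Fin.val_last _
  refine Qintro (n := (∑ a, N a)+1) ?_ _ ?_ (hchain2 _ F hF2 (s ×ˢ {Fin.last _}) hG)
  · rw [Finset.sum_add_distrib, sum_dd]
  · rw [cntF_cone, hF1]

lemma Qdown
    (hcomplex : ∀ n, ∀ F ∈ Δ n, ∀ G ⊆ F, G ∈ Δ n)
    {N : Finset (Fin c) → ℕ} {a : Finset (Fin c)}
    (hQ : QQ Δ (fun t => N t + dd a t)) {b : Finset (Fin c)} (hba : b ⊆ a) :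
    QQ Δ (fun t => N t + dd b t) := by
  have hsum : ∑ t, (N t + dd a t) = (∑ t, N t) + 1 := by
    rw [Finset.sum_add_distrib, sum_dd]
  obtain ⟨F, hF1, hF2⟩ := Qelim' hQ hsum
  have hfib : 0 < cntf (colF F) a := by
    rw [show cntf (colF F) a = cntF F a from rfl, hF1]
    simp [dd]
  rw [cntf, Finset.card_pos] at hfib
  obtain ⟨j₀, hj₀⟩ := hfib
  rw [Finset.mem_filter] at hj₀
  have hj₀' : colF F j₀ = a := hj₀.2
  set γ' := Function.update (colF F) j₀ b with hγ'
  have hsub : faceF γ' ⊆ F := by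
    intro v hv
    rw [mem_faceF] at hv
    have hm : v.1 ∈ colF F v.2 := by
      rcases eq_or_ne v.2 j₀ with h | hne
      · rw [hγ', h, Function.update_self] at hv
        rw [h, hj₀']
        exact hba hv
      · rwa [hγ', Function.update_of_ne hne] at hv
    rw [mem_colF] at hm
    simpa using hm
  refine Qintro (n := (∑ t, N t) + 1) ?_ (faceF γ') ?_ (hcomplex _ F hF2 _ hsub)
  · rw [Finset.sum_add_distrib, sum_dd]
  · funext t
    show cntf (colF (faceF γ')) t = _
    rw [colF_faceF]
    have hu := cntf_update (γ := colF F) (j₀ := j₀) hj₀' b t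
    have hcF : cntf (colF F) t = N t + dd a t := by
      rw [show cntf (colF F) t = cntF F t from rfl, hF1]
    rw [hcF, ← hγ'] at hu
    simp only [dd] at hu ⊢
    split_ifs at hu ⊢ <;> omega

lemma Qmono
    (hchain2 : ∀ n, ∀ F ∈ Δ n, ∀ G : Finset (Fin c × Fin (n + 1)),
      (∀ v ∈ G, (v.2 : ℕ) = n) →
      F.image (fun v : Fin c × Fin n => (v.1, Fin.castSucc v.2)) ∪ G ∈ Δ (n + 1)) :
    ∀ (k : ℕ) (N M : Finset (Fin c) → ℕ), (∑ t, M t) - (∑ t, N t) = k →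
      (∀ t, N t ≤ M t) → QQ Δ N → QQ Δ M := by
  intro k
  induction k with
  | zero =>
    intro N M hk hle hQ
    have hss : ∑ t, N t ≤ ∑ t, M t := Finset.sum_le_sum (fun t _ => hle t)
    have : N = M := by
      funext t
      by_contra hne
      have hlt : N t < M t := lt_of_le_of_ne (hle t) hne
      have := Finset.sum_lt_sum (fun i (_ : i ∈ univ) => hle i) ⟨t, mem_univ t, hlt⟩
      omega
    rwa [← this]
  | succ k ih =>
    intro N M hk hle hQ
    have hex : ∃ a, N a < M a := by
      by_contra h
      push_neg at h
      have : ∑ t, M t ≤ ∑ t, N t := Finset.sum_le_sum (fun t _ => h t)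
      omega
    obtain ⟨a, ha⟩ := hex
    set M' := Function.update M a (M a - 1) with hM'
    have hsum' : ∑ t, M' t = (∑ t, M t) - 1 := by
      rw [hM', Finset.sum_update_of_mem (mem_univ a), Finset.sdiff_singleton_eq_erase]
      rw [← Finset.add_sum_erase _ _ (mem_univ a)]
      omega
    have hle' : ∀ t, N t ≤ M' t := by
      intro t
      rcases eq_or_ne t a with rfl | hne
      · rw [hM', Function.update_self]; omega
      · rw [hM', Function.update_of_ne hne]; exact hle t
    have hQ' : QQ Δ M' := by
      apply ih N M' _ hle' hQ
      have h1 : ∑ t, N t ≤ ∑ t, M' t := Finset.sum_le_sum (fun t _ => hle' t)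
      omega
    have : M = fun t => M' t + dd a t := by
      funext t
      rcases eq_or_ne t a with rfl | hne
      · rw [hM', Function.update_self]; simp [dd]; omega
      · rw [hM', Function.update_of_ne hne]; simp [dd, hne]
    rw [this]
    exact Qstep hchain2 hQ' a

end qlayer

section glayer
variable {c : ℕ} {Δ : ∀ n : ℕ, Set (Finset (Fin c × Fin n))}

def AA {c : ℕ} (Δ : ∀ n : ℕ, Set (Finset (Fin c × Fin n))) (N : Finset (Fin c) → ℕ) : Prop :=
  ∃ k, QQ Δ (padd N k)

noncomputable def gg {c : ℕ} (Δ : ∀ n : ℕ, Set (Finset (Fin c × Fin n)))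
    (N : Finset (Fin c) → ℕ) : ℕ :=
  sInf {k | QQ Δ (padd N k)}

lemma g_le {N : Finset (Fin c) → ℕ} {k : ℕ} (h : QQ Δ (padd N k)) : gg Δ N ≤ k :=
  Nat.sInf_le h

lemma g_mem {N : Finset (Fin c) → ℕ} (h : AA Δ N) : QQ Δ (padd N (gg Δ N)) :=
  Nat.sInf_mem h

lemma Qpad_up
    (hchain2 : ∀ n, ∀ F ∈ Δ n, ∀ G : Finset (Fin c × Fin (n + 1)),
      (∀ v ∈ G, (v.2 : ℕ) = n) →
      F.image (fun v : Fin c × Fin n => (v.1, Fin.castSucc v.2)) ∪ G ∈ Δ (n + 1))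
    {N : Finset (Fin c) → ℕ} {k : ℕ} (h : QQ Δ (padd N k)) {k' : ℕ} (hk : k ≤ k') :
    QQ Δ (padd N k') := by
  refine Nat.le_induction h (fun m hm ih => ?_) k' hk
  rw [padd_succ]
  exact Qstep hchain2 ih ∅

lemma g_mono
    (hchain2 : ∀ n, ∀ F ∈ Δ n, ∀ G : Finset (Fin c × Fin (n + 1)),
      (∀ v ∈ G, (v.2 : ℕ) = n) →
      F.image (fun v : Fin c × Fin n => (v.1, Fin.castSucc v.2)) ∪ G ∈ Δ (n + 1))
    {N M : Finset (Fin c) → ℕ} (hle : ∀ t, N t ≤ M t) (hA : AA Δ N) :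
    gg Δ M ≤ gg Δ N ∧ AA Δ M := by
  have h1 : QQ Δ (padd N (gg Δ N)) := g_mem hA
  have hle' : ∀ t, padd N (gg Δ N) t ≤ padd M (gg Δ N) t := by
    intro t; simp only [padd]; have := hle t; omega
  have h2 : QQ Δ (padd M (gg Δ N)) := Qmono hchain2 _ _ _ rfl hle' h1
  exact ⟨g_le h2, ⟨_, h2⟩⟩

/-- the set of "drop points": no empty columns, realizable, and removing any single
letter strictly increases the number of extra empty columns needed. -/
def TT {c : ℕ} (Δ : ∀ n : ℕ, Set (Finset (Fin c × Fin n))) : Set (Finset (Fin c) → ℕ) :=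
  {N | N ∅ = 0 ∧ AA Δ N ∧ ∀ (M : Finset (Fin c) → ℕ) (s : Finset (Fin c)), s ≠ ∅ →
    N = (fun t => M t + dd s t) → gg Δ N < gg Δ M}

lemma TT_finite
    (hchain2 : ∀ n, ∀ F ∈ Δ n, ∀ G : Finset (Fin c × Fin (n + 1)),
      (∀ v ∈ G, (v.2 : ℕ) = n) →
      F.image (fun v : Fin c × Fin n => (v.1, Fin.castSucc v.2)) ∪ G ∈ Δ (n + 1)) :
    (TT Δ).Finite := by
  by_contra hfin
  have hinf : (TT Δ).Infinite := hfin
  set φ : (Finset (Fin c) → ℕ) → ((Finset (Fin c) → ℕ) × ℕ) := fun N => (N, gg Δ N) with hφ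
  have himg : (φ '' TT Δ).Infinite := by
    apply Set.Infinite.image _ hinf
    intro a _ b _ hab
    exact congrArg Prod.fst hab
  have hpwo : (φ '' TT Δ).IsPWO := by
    have hbig : (Set.univ ×ˢ Set.univ : Set ((Finset (Fin c) → ℕ) × ℕ)).IsPWO :=
      Set.isPWO_of_wellQuasiOrderedLE _
    exact hbig.mono (fun x _ => ⟨Set.mem_univ _, Set.mem_univ _⟩)
  let e := Set.Infinite.natEmbedding _ himg
  have hseq := hpwo (fun n => e n)
  obtain ⟨m, n, hmn, hle⟩ := hseq
  have hne : ((e m : _) : (Finset (Fin c) → ℕ) × ℕ) ≠ ((e n : _) : (Finset (Fin c) → ℕ) × ℕ) := by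
    intro h
    exact hmn.ne (e.injective (Subtype.val_injective h))
  obtain ⟨N, hN, hNx⟩ := (e m).2
  obtain ⟨M, hM, hMy⟩ := (e n).2
  have hle' : ((e m : _) : (Finset (Fin c) → ℕ) × ℕ) ≤ ((e n : _) : (Finset (Fin c) → ℕ) × ℕ) := hle
  rw [← hNx, ← hMy] at hle' hne
  replace hle := hle'
  have hNM : N ≠ M := fun h => hne (by rw [hφ, h])
  have hle1 : ∀ t, N t ≤ M t := fun t => hle.1 t
  have hle2 : gg Δ N ≤ gg Δ M := hle.2
  have hex : ∃ s, N s < M s := by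
    by_contra h
    push_neg at h
    exact hNM (funext fun t => le_antisymm (hle1 t) (h t))
  obtain ⟨s, hs⟩ := hex
  have hsne : s ≠ ∅ := by
    intro h
    rw [h] at hs
    rw [hN.1, hM.1] at hs
    omega
  set M' := Function.update M s (M s - 1) with hM'
  have hdecomp : M = fun t => M' t + dd s t := by
    funext t
    rcases eq_or_ne t s with rfl | hne'
    · rw [hM', Function.update_self]; simp [dd]; omega
    · rw [hM', Function.update_of_ne hne']; simp [dd, hne']
  have hdrop : gg Δ M < gg Δ M' := hM.2.2 M' s hsne hdecomp
  have hle' : ∀ t, N t ≤ M' t := by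
    intro t
    rcases eq_or_ne t s with rfl | hne'
    · rw [hM', Function.update_self]; omega
    · rw [hM', Function.update_of_ne hne']; exact hle1 t
  have := (g_mono hchain2 hle' hN.2.1).1
  omega

lemma exists_bound
    (hchain2 : ∀ n, ∀ F ∈ Δ n, ∀ G : Finset (Fin c × Fin (n + 1)),
      (∀ v ∈ G, (v.2 : ℕ) = n) →
      F.image (fun v : Fin c × Fin n => (v.1, Fin.castSucc v.2)) ∪ G ∈ Δ (n + 1)) :
    ∃ n₀ : ℕ, ∀ N ∈ TT Δ, (∑ t, N t) + gg Δ N ≤ n₀ := by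
  obtain ⟨n₀, hn₀⟩ := ((TT_finite hchain2).image (fun N => (∑ t, N t) + gg Δ N)).bddAbove
  exact ⟨n₀, fun N hN => hn₀ (Set.mem_image_of_mem _ hN)⟩

end glayer


/-- **Stabilization of Sym-invariant chains of simplicial complexes.**
Let `(Δ_n)` be a Sym-invariant chain of simplicial complexes, `Δ_n` on the vertex set
`V_n = [c] × [n]`.  Then there is `n₀` such that for every `n ≥ n₀`, `Δ_{n+1}` equals the
`Sym(n+1)`-orbit of the `c`-fold cone over `Δ_n` with apices `V_{n+1} − V_n`. -/
theorem chain_of_complexes_stabilizes (c : ℕ) (hc : 0 < c)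
    (Δ : ∀ n : ℕ, Set (Finset (Fin c × Fin n)))
    (hcomplex : ∀ n, ∀ F ∈ Δ n, ∀ G ⊆ F, G ∈ Δ n)
    (hchain1 : ∀ m n : ℕ, ∀ h : m ≤ n, ∀ F ∈ Δ m, ∀ σ : Equiv.Perm (Fin n),
      (F.image (fun v : Fin c × Fin m => (v.1, Fin.castLE h v.2))).image
          (fun v : Fin c × Fin n => (v.1, σ v.2)) ∈ Δ n)
    (hchain2 : ∀ n, ∀ F ∈ Δ n, ∀ G : Finset (Fin c × Fin (n + 1)),
      (∀ v ∈ G, (v.2 : ℕ) = n) →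
      F.image (fun v : Fin c × Fin n => (v.1, Fin.castSucc v.2)) ∪ G ∈ Δ (n + 1)) :
    ∃ n₀ : ℕ, ∀ n, n₀ ≤ n → ∀ H : Finset (Fin c × Fin (n + 1)),
      H ∈ Δ (n + 1) ↔
        ∃ F ∈ Δ n, ∃ G : Finset (Fin c × Fin (n + 1)),
          (∀ v ∈ G, (v.2 : ℕ) = n) ∧
          ∃ σ : Equiv.Perm (Fin (n + 1)),
            H = (F.image (fun v : Fin c × Fin n => (v.1, Fin.castSucc v.2)) ∪ G).image
                  (fun v => (v.1, σ v.2)) := by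
  obtain ⟨n₀, hn₀⟩ := exists_bound (Δ := Δ) hchain2
  refine ⟨n₀, fun n hn H => ?_⟩
  constructor
  · -- forward direction
    intro hH
    set N : Finset (Fin c) → ℕ := cntF H with hNdef
    have hsumN : ∑ a, N a = n + 1 := sum_cntf (colF H)
    have hQN : QQ Δ N := Qintro hsumN H hNdef.symm hH
    -- the unified ending
    suffices hmain : ∀ (M : Finset (Fin c) → ℕ) (s : Finset (Fin c)), AA Δ M →
        (∑ t, M t) + gg Δ M ≤ n →
        ((fun t => padd M (n - ∑ t, M t) t + dd s t) = N) →
        (∃ F ∈ Δ n, ∃ G : Finset (Fin c × Fin (n + 1)),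
          (∀ v ∈ G, (v.2 : ℕ) = n) ∧
          ∃ σ : Equiv.Perm (Fin (n + 1)),
            H = (F.image (fun v : Fin c × Fin n => (v.1, Fin.castSucc v.2)) ∪ G).image
                  (fun v => (v.1, σ v.2))) by
      set Nb : Finset (Fin c) → ℕ := fun t => if t = ∅ then 0 else N t with hNb
      have hNb0 : Nb ∅ = 0 := by simp [hNb]
      have hpadN : padd Nb (N ∅) = N := by
        funext t
        simp only [padd, hNb]
        split_ifs with h
        · rw [h]; omega
        · omega
      have hQpad : QQ Δ (padd Nb (N ∅)) := by rwa [hpadN]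
      have hANb : AA Δ Nb := ⟨_, hQpad⟩
      have hgN : gg Δ Nb ≤ N ∅ := g_le hQpad
      have hsumNb : (∑ t, Nb t) + N ∅ = n + 1 := by
        have h1 := sum_padd Nb (N ∅)
        rw [hpadN, hsumN] at h1
        omega
      by_cases hcase : (∑ t, Nb t) + gg Δ Nb ≤ n
      · refine hmain Nb ∅ hANb hcase ?_
        rw [← hpadN]
        funext t
        simp only [padd, dd]
        split_ifs with h
        · omega
        · omega
      · have hfN : (∑ t, Nb t) + gg Δ Nb = n + 1 := by omega
        have hnotT : Nb ∉ TT Δ := by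
          intro hT
          have := hn₀ Nb hT
          omega
        have hdropfail : ¬(∀ (M : Finset (Fin c) → ℕ) (s : Finset (Fin c)), s ≠ ∅ →
            Nb = (fun t => M t + dd s t) → gg Δ Nb < gg Δ M) := by
          intro h
          exact hnotT ⟨hNb0, hANb, h⟩
        push_neg at hdropfail
        obtain ⟨M, s, hsne, hdecomp, hge⟩ := hdropfail
        have hM0 : M ∅ = 0 := by
          have := congrFun hdecomp ∅
          rw [hNb0] at this
          simp only [dd] at this
          omega
        have hAM : AA Δ M := by
          have h1 : QQ Δ (padd Nb (gg Δ Nb)) := g_mem hANb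
          have h2 : padd Nb (gg Δ Nb) = fun t => padd M (gg Δ Nb) t + dd s t := by
            funext t
            have := congrFun hdecomp t
            simp only [padd]
            omega
          rw [h2] at h1
          have h3 := Qdown (Δ := Δ) hcomplex h1 (Finset.empty_subset s)
          exact ⟨gg Δ Nb + 1, by rw [padd_succ]; exact h3⟩
        have hsumM : (∑ t, M t) + 1 = ∑ t, Nb t := by
          have h1 : ∑ t, Nb t = ∑ t, (M t + dd s t) := by rw [hdecomp]
          rw [Finset.sum_add_distrib, sum_dd] at h1
          omega
        refine hmain M s hAM (by omega) ?_
        rw [← hpadN]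
        funext t
        have hdt := congrFun hdecomp t
        simp only [padd, hNb] at hdt ⊢
        split_ifs at hdt ⊢ with h
        · subst h
          have hds : dd s (∅ : Finset (Fin c)) = 0 := by
            simp only [dd]
            rw [if_neg (by exact fun hh => hsne.ne_empty hh.symm)]
          rw [hds] at hdt ⊢
          omega
        · omega
    -- proof of the unified ending
    intro M s hAM hsz hkey
    have hup : QQ Δ (padd M (n - ∑ t, M t)) := Qpad_up hchain2 (g_mem hAM) (by omega)
    have hsum' : ∑ t, padd M (n - ∑ t, M t) t = n := by rw [sum_padd]; omega
    obtain ⟨F, hF1, hF2⟩ := Qelim' hup hsum'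
    refine ⟨F, hF2, s ×ˢ {Fin.last n}, ?_, ?_⟩
    · intro v hv
      rw [Finset.mem_product, Finset.mem_singleton] at hv
      rw [hv.2]
      exact Fin.val_last n
    · have hcnt : cntF ((F.image fun v => (v.1, Fin.castSucc v.2)) ∪ s ×ˢ {Fin.last n}) = N := by
        rw [cntF_cone, hF1]
        exact hkey
      obtain ⟨σ, hσ⟩ := cntf_exists_perm
        (γ := colF ((F.image fun v => (v.1, Fin.castSucc v.2)) ∪ s ×ˢ {Fin.last n}))
        (γ' := colF H)
        (fun a => by
          rw [show cntf (colF ((F.image fun v => (v.1, Fin.castSucc v.2)) ∪ s ×ˢ {Fin.last n})) a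
              = cntF ((F.image fun v => (v.1, Fin.castSucc v.2)) ∪ s ×ˢ {Fin.last n}) a from rfl,
            hcnt, hNdef]
          rfl)
      exact ⟨σ, (image_perm_eq hσ).symm⟩
  · -- reverse direction
    rintro ⟨F, hF, G, hG, σ, rfl⟩
    exact perm_mem hchain1 (hchain2 n F hF G hG) σ
end

section
/- (Alexander Dual Membership Criterion) Let A be a 0-1 matrix with c rows and m columns, let n ≥ m, and for each nonempty T ⊆ [c] let k_T be the number of columns of A with support T; set k_∅ := n − Σ_{∅≠T⊆[c]} k_T. Let I_n ⊆ R_n be the ideal generated by the Sym(n)-orbit of x^A (A regarded as a c×n matrix by appending zero columns). Let B ∈ {0,1}^{c×n} and for T ⊆ [c] let ℓ_T = ℓ_T(B). Then the following are equivalent: (a) x^B ∉ I_n^∨; (b) for every order ideal J of 2^[c], Σ_{T∈J} k_T ≤ Σ_{T∈J} ℓ_{T^c}; (c) for every order ideal J of 2^[c], Σ_{T∈J} ℓ_T ≤ Σ_{T∈J} k_{T^c}. Here T^c = [c] − T. -/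
open MvPolynomial Finset

noncomputable section

/-- The squarefree monomial `x^B` of `R_n = k[x_{i,j} : i ∈ [c], j ∈ [n]]` whose exponent
matrix has columns with supports `B 0, …, B (n-1)`. -/
def matMon (K : Type*) [CommSemiring K] {c n : ℕ}
    (B : Fin n → Finset (Fin c)) : MvPolynomial (Fin c × Fin n) K :=
  ∏ j : Fin n, ∏ i ∈ B j, X (i, j)

/-- `ℓ_T(B)`: the number of columns of `B` with support `T`. -/
def colCount {c n : ℕ} (B : Fin n → Finset (Fin c)) (T : Finset (Fin c)) : ℕ :=
  (univ.filter fun j => B j = T).card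

/-- Pad a `c × m` matrix with zero columns to a `c × n` matrix. -/
def pad {c m : ℕ} (n : ℕ) (A : Fin m → Finset (Fin c)) : Fin n → Finset (Fin c) :=
  fun j => if h : (j : ℕ) < m then A ⟨j, h⟩ else ∅

/-- The ideal generated by the `Sym(n)`-orbit of the squarefree monomial `x^A`. -/
def symOrbitIdeal (K : Type*) [CommSemiring K] {c n : ℕ}
    (A : Fin n → Finset (Fin c)) : Ideal (MvPolynomial (Fin c × Fin n) K) :=
  Ideal.span {p | ∃ σ : Equiv.Perm (Fin n),
    p = rename (fun v : Fin c × Fin n => (v.1, σ v.2)) (matMon K A)}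

/-- The Alexander dual of a squarefree monomial ideal: the ideal generated by all
squarefree monomials `x^B` with `x^{Bᶜ} ∉ I`, `Bᶜ` the entrywise complement. -/
def dualIdeal (K : Type*) [CommSemiring K] {c n : ℕ}
    (I : Ideal (MvPolynomial (Fin c × Fin n) K)) : Ideal (MvPolynomial (Fin c × Fin n) K) :=
  Ideal.span {p | ∃ B : Fin n → Finset (Fin c),
    matMon K (fun j => (B j)ᶜ) ∉ I ∧ p = matMon K B}

def expB {c n : ℕ} (B : Fin n → Finset (Fin c)) : (Fin c × Fin n) →₀ ℕ :=
  Finsupp.equivFunOnFinite.symm fun v => if v.1 ∈ B v.2 then 1 else 0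

lemma expB_apply {c n : ℕ} (B : Fin n → Finset (Fin c)) (v : Fin c × Fin n) :
    expB B v = if v.1 ∈ B v.2 then 1 else 0 := rfl

lemma expB_le_iff {c n : ℕ} {C B : Fin n → Finset (Fin c)} :
    expB C ≤ expB B ↔ ∀ j, C j ⊆ B j := by
  rw [Finsupp.le_def]
  constructor
  · intro h j i hi
    have := h (i, j)
    simp only [expB_apply, hi, if_true] at this
    by_contra hib
    simp [hib] at this
  · intro h v
    simp only [expB_apply]
    split
    · next hv => simp [h v.2 hv]
    · simp

lemma prod_monomial_one {K : Type*} [CommSemiring K] {ι σ : Type*} (s : Finset ι)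
    (f : ι → (σ →₀ ℕ)) :
    (∏ x ∈ s, (monomial (f x) (1 : K))) = monomial (∑ x ∈ s, f x) 1 := by
  induction s using Finset.cons_induction with
  | empty => simp
  | cons a s ha ih => rw [Finset.prod_cons, Finset.sum_cons, ih, monomial_mul, one_mul]

lemma sum_single_eq_expB {c n : ℕ} (B : Fin n → Finset (Fin c)) :
    ∑ j : Fin n, ∑ i ∈ B j, Finsupp.single ((i, j) : Fin c × Fin n) 1 = expB B := by
  ext ⟨a, b⟩
  rw [Finsupp.finset_sum_apply]
  simp only [Finsupp.finset_sum_apply, Finsupp.single_apply, expB_apply, Prod.mk.injEq]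
  rw [Finset.sum_eq_single b]
  · simp [Finset.sum_ite_eq']
  · intro j _ hj
    apply Finset.sum_eq_zero
    intro i _
    simp [hj]
  · simp

lemma matMon_eq {K : Type*} [CommSemiring K] {c n : ℕ} (B : Fin n → Finset (Fin c)) :
    matMon K B = monomial (expB B) 1 := by
  rw [matMon, ← sum_single_eq_expB, ← prod_monomial_one]
  refine Finset.prod_congr rfl fun j _ => ?_
  rw [← prod_monomial_one]
  refine Finset.prod_congr rfl fun i _ => ?_
  rfl

lemma rename_matMon {K : Type*} [CommSemiring K] {c n : ℕ} (A : Fin n → Finset (Fin c))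
    (σ : Equiv.Perm (Fin n)) :
    rename (fun v : Fin c × Fin n => (v.1, σ v.2)) (matMon K A) =
      monomial (expB fun j => A (σ.symm j)) 1 := by
  rw [matMon_eq, rename_monomial]
  have he : (fun v : Fin c × Fin n => (v.1, σ v.2)) =
      ((Equiv.refl (Fin c)).prodCongr σ : Fin c × Fin n ≃ Fin c × Fin n) := rfl
  have hmd : Finsupp.mapDomain (fun v : Fin c × Fin n => (v.1, σ v.2)) (expB A) =
      expB fun j => A (σ.symm j) := by
    ext v
    rw [he, Finsupp.mapDomain_equiv_apply]
    simp [expB_apply, Equiv.prodCongr_symm]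
  rw [hmd]

lemma matMon_mem_symOrbit_iff {K : Type*} [Field K] {c n : ℕ}
    (A B : Fin n → Finset (Fin c)) :
    matMon K B ∈ symOrbitIdeal K A ↔ ∃ σ : Equiv.Perm (Fin n), ∀ j, A (σ j) ⊆ B j := by
  have hset : {p | ∃ σ : Equiv.Perm (Fin n),
      p = rename (fun v : Fin c × Fin n => (v.1, σ v.2)) (matMon K A)} =
      (fun d => monomial d (1 : K)) '' {d | ∃ σ : Equiv.Perm (Fin n),
        d = expB fun j => A (σ.symm j)} := by
    ext p
    constructor
    · rintro ⟨σ, rfl⟩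
      exact ⟨expB fun j => A (σ.symm j), ⟨σ, rfl⟩, (rename_matMon A σ).symm⟩
    · rintro ⟨d, ⟨σ, rfl⟩, rfl⟩
      exact ⟨σ, (rename_matMon A σ).symm⟩
  rw [symOrbitIdeal, hset, matMon_eq, mem_ideal_span_monomial_image]
  have hsupp : (monomial (expB B) (1 : K)).support = {expB B} := by
    classical rw [support_monomial, if_neg one_ne_zero]
  rw [hsupp]
  constructor
  · intro h
    obtain ⟨si, ⟨σ, rfl⟩, hle⟩ := h (expB B) (Finset.mem_singleton_self _)
    exact ⟨σ.symm, fun j => (expB_le_iff.mp hle) j⟩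
  · rintro ⟨σ, hσ⟩ xi hxi
    rw [Finset.mem_singleton] at hxi
    subst hxi
    exact ⟨expB fun j => A (σ.symm.symm j), ⟨σ.symm, rfl⟩,
      expB_le_iff.mpr (by simpa using hσ)⟩

lemma matMon_mem_dual_iff {K : Type*} [Field K] {c n : ℕ}
    (A B : Fin n → Finset (Fin c)) :
    matMon K B ∈ dualIdeal K (symOrbitIdeal K A) ↔
      matMon K (fun j => (B j)ᶜ) ∉ symOrbitIdeal K A := by
  constructor
  · intro h
    have hset : {p | ∃ B' : Fin n → Finset (Fin c),
        matMon K (fun j => (B' j)ᶜ) ∉ symOrbitIdeal K A ∧ p = matMon K B'} =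
        (fun d => monomial d (1 : K)) '' {d | ∃ B' : Fin n → Finset (Fin c),
          matMon K (fun j => (B' j)ᶜ) ∉ symOrbitIdeal K A ∧ d = expB B'} := by
      ext p
      constructor
      · rintro ⟨B', hB', rfl⟩
        exact ⟨expB B', ⟨B', hB', rfl⟩, (matMon_eq B').symm⟩
      · rintro ⟨d, ⟨B', hB', rfl⟩, rfl⟩
        exact ⟨B', hB', (matMon_eq B').symm⟩
    rw [dualIdeal, hset, matMon_eq, mem_ideal_span_monomial_image] at h
    have hsupp : (monomial (expB B) (1 : K)).support = {expB B} := by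
      classical rw [support_monomial, if_neg one_ne_zero]
    rw [hsupp] at h
    obtain ⟨si, ⟨B', hB', rfl⟩, hle⟩ := h (expB B) (Finset.mem_singleton_self _)
    intro hmem
    apply hB'
    rw [matMon_mem_symOrbit_iff] at hmem ⊢
    obtain ⟨σ, hσ⟩ := hmem
    exact ⟨σ, fun j => (hσ j).trans (Finset.compl_subset_compl.mpr (expB_le_iff.mp hle j))⟩
  · intro h
    exact Ideal.subset_span ⟨B, h, rfl⟩

lemma mem_symOrbit_iff_hall {K : Type*} [Field K] {c n : ℕ}
    (A C : Fin n → Finset (Fin c)) :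
    matMon K C ∈ symOrbitIdeal K A ↔
      ∀ s : Finset (Fin n),
        s.card ≤ (s.biUnion fun j => univ.filter fun j' => A j ⊆ C j').card := by
  rw [matMon_mem_symOrbit_iff,
    Finset.all_card_le_biUnion_card_iff_exists_injective
      (fun j => univ.filter fun j' => A j ⊆ C j')]
  constructor
  · rintro ⟨σ, hσ⟩
    exact ⟨σ.symm, σ.symm.injective, fun j => by
      simp only [Finset.mem_filter, Finset.mem_univ, true_and]
      simpa using hσ (σ.symm j)⟩
  · rintro ⟨f, hf, hf2⟩
    have hb : Function.Bijective f := (Finite.injective_iff_bijective).mp hf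
    refine ⟨(Equiv.ofBijective f hb).symm, fun j => ?_⟩
    have := hf2 ((Equiv.ofBijective f hb).symm j)
    simp only [Finset.mem_filter, Finset.mem_univ, true_and] at this
    have hfj : f ((Equiv.ofBijective f hb).symm j) = j :=
      (Equiv.ofBijective f hb).apply_symm_apply j
    rwa [hfj] at this

lemma sum_colCount_eq {c n : ℕ} (C : Fin n → Finset (Fin c)) (J : Finset (Finset (Fin c))) :
    ∑ T ∈ J, colCount C T = (univ.filter fun j => C j ∈ J).card := by
  rw [Finset.card_eq_sum_card_fiberwise
    (f := C) (s := univ.filter fun j => C j ∈ J) (t := J) (fun j hj => (Finset.mem_filter.mp hj).2)]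
  refine Finset.sum_congr rfl fun T hT => ?_
  rw [colCount, Finset.filter_filter]
  congr 1
  refine Finset.filter_congr fun j _ => ?_
  exact ⟨fun h => ⟨h ▸ hT, h⟩, fun h => h.2⟩

lemma colCount_compl {c n : ℕ} (B : Fin n → Finset (Fin c)) (T : Finset (Fin c)) :
    colCount B Tᶜ = colCount (fun j => (B j)ᶜ) T := by
  unfold colCount
  congr 1
  refine Finset.filter_congr fun j _ => ?_
  show B j = Tᶜ ↔ (B j)ᶜ = T
  rw [compl_eq_comm, eq_comm]

lemma sum_colCount_compl_eq {c n : ℕ} (B : Fin n → Finset (Fin c))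
    (J : Finset (Finset (Fin c))) :
    ∑ T ∈ J, colCount B Tᶜ = (univ.filter fun j => (B j)ᶜ ∈ J).card := by
  rw [Finset.sum_congr rfl fun T _ => colCount_compl B T, sum_colCount_eq]

lemma hall_iff_orderIdeal {c n : ℕ} (A B : Fin n → Finset (Fin c)) :
    (∀ s : Finset (Fin n),
        s.card ≤ (s.biUnion fun j => univ.filter fun j' => A j ⊆ (B j')ᶜ).card) ↔
      (∀ J : Finset (Finset (Fin c)),
        (∀ T ∈ J, ∀ S : Finset (Fin c), T ⊆ S → S ∈ J) →
        ∑ T ∈ J, colCount A T ≤ ∑ T ∈ J, colCount B Tᶜ) := by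
  constructor
  · intro h J hJ
    rw [sum_colCount_eq, sum_colCount_compl_eq]
    refine (h (univ.filter fun j => A j ∈ J)).trans (Finset.card_le_card ?_)
    intro j' hj'
    rw [Finset.mem_biUnion] at hj'
    obtain ⟨j, hj, hj'2⟩ := hj'
    rw [Finset.mem_filter] at hj hj'2 ⊢
    exact ⟨Finset.mem_univ _, hJ _ hj.2 _ hj'2.2⟩
  · intro h s
    set J : Finset (Finset (Fin c)) := univ.filter fun T => ∃ j ∈ s, A j ⊆ T with hJdef
    have hJ : ∀ T ∈ J, ∀ S : Finset (Fin c), T ⊆ S → S ∈ J := by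
      intro T hT S hTS
      rw [hJdef, Finset.mem_filter] at hT ⊢
      obtain ⟨_, j, hj, hAj⟩ := hT
      exact ⟨Finset.mem_univ _, j, hj, hAj.trans hTS⟩
    have h1 : s.card ≤ ∑ T ∈ J, colCount A T := by
      rw [sum_colCount_eq]
      apply Finset.card_le_card
      intro j hj
      rw [Finset.mem_filter]
      refine ⟨Finset.mem_univ _, ?_⟩
      rw [hJdef, Finset.mem_filter]
      exact ⟨Finset.mem_univ _, j, hj, Finset.Subset.refl _⟩
    have h2 : ∑ T ∈ J, colCount B Tᶜ ≤
        (s.biUnion fun j => univ.filter fun j' => A j ⊆ (B j')ᶜ).card := by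
      rw [sum_colCount_compl_eq]
      apply Finset.card_le_card
      intro j' hj'
      rw [Finset.mem_filter, hJdef, Finset.mem_filter] at hj'
      obtain ⟨_, _, j, hj, hAj⟩ := hj'
      rw [Finset.mem_biUnion]
      exact ⟨j, hj, Finset.mem_filter.mpr ⟨Finset.mem_univ _, hAj⟩⟩
    exact h1.trans ((h J hJ).trans h2)

lemma sum_colCount_univ {c n : ℕ} (C : Fin n → Finset (Fin c)) :
    ∑ T ∈ univ, colCount C T = n := by
  rw [sum_colCount_eq]
  simp

lemma sum_filter_compl_mem {c : ℕ} (g : Finset (Fin c) → ℕ) (J : Finset (Finset (Fin c))) :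
    ∑ T ∈ univ.filter (fun T => Tᶜ ∈ J), g T = ∑ S ∈ J, g Sᶜ := by
  have himg : univ.filter (fun T : Finset (Fin c) => Tᶜ ∈ J) = J.image compl := by
    ext T
    simp only [Finset.mem_filter, Finset.mem_univ, true_and, Finset.mem_image]
    constructor
    · intro h; exact ⟨Tᶜ, h, compl_compl T⟩
    · rintro ⟨S, hS, rfl⟩; rwa [compl_compl]
  rw [himg, Finset.sum_image (fun x _ y _ h => compl_injective h)]

lemma flip_ineq {c n : ℕ} (F G : Fin n → Finset (Fin c))
    (h : ∀ J : Finset (Finset (Fin c)),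
        (∀ T ∈ J, ∀ S : Finset (Fin c), T ⊆ S → S ∈ J) →
        ∑ T ∈ J, colCount F T ≤ ∑ T ∈ J, colCount G Tᶜ) :
    ∀ J : Finset (Finset (Fin c)),
        (∀ T ∈ J, ∀ S : Finset (Fin c), T ⊆ S → S ∈ J) →
        ∑ T ∈ J, colCount G T ≤ ∑ T ∈ J, colCount F Tᶜ := by
  intro J hJ
  have hJ' : ∀ T ∈ univ.filter (fun T : Finset (Fin c) => ¬ Tᶜ ∈ J),
      ∀ S : Finset (Fin c), T ⊆ S → S ∈ univ.filter (fun T : Finset (Fin c) => ¬ Tᶜ ∈ J) := by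
    intro T hT S hTS
    rw [Finset.mem_filter] at hT ⊢
    exact ⟨Finset.mem_univ _, fun hS => hT.2 (hJ _ hS _ (Finset.compl_subset_compl.mpr hTS))⟩
  have key := h _ hJ'
  have e1 : (∑ S ∈ J, colCount F Sᶜ) +
      (∑ T ∈ univ.filter (fun T : Finset (Fin c) => ¬ Tᶜ ∈ J), colCount F T) = n := by
    have hs := Finset.sum_filter_add_sum_filter_not univ
      (fun T : Finset (Fin c) => Tᶜ ∈ J) (colCount F)
    rw [sum_filter_compl_mem (colCount F) J, sum_colCount_univ] at hs
    exact hs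
  have e2 : (∑ S ∈ J, colCount G S) +
      (∑ T ∈ univ.filter (fun T : Finset (Fin c) => ¬ Tᶜ ∈ J), colCount G Tᶜ) = n := by
    have hGuniv : (∑ T ∈ (univ : Finset (Finset (Fin c))), colCount G Tᶜ) = n := by
      rw [sum_colCount_compl_eq]
      simp
    have hs := Finset.sum_filter_add_sum_filter_not univ
      (fun T : Finset (Fin c) => Tᶜ ∈ J) (fun T => colCount G Tᶜ)
    have h1 : ∑ T ∈ univ.filter (fun T : Finset (Fin c) => Tᶜ ∈ J), colCount G Tᶜ =
        ∑ S ∈ J, colCount G S := by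
      rw [sum_filter_compl_mem (fun T => colCount G Tᶜ) J]
      exact Finset.sum_congr rfl fun S _ => by rw [compl_compl]
    rw [h1, hGuniv] at hs
    exact hs
  omega

/-- **Alexander Dual Membership Criterion.** -/
theorem alexander_dual_membership_criterion
    (K : Type*) [Field K] {c m n : ℕ} (hc : 0 < c) (hmn : m ≤ n)
    (A : Fin m → Finset (Fin c)) (B : Fin n → Finset (Fin c)) :
    ((matMon K B ∉ dualIdeal K (symOrbitIdeal K (pad n A))) ↔
      (∀ J : Finset (Finset (Fin c)),
        (∀ T ∈ J, ∀ S : Finset (Fin c), T ⊆ S → S ∈ J) →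
        ∑ T ∈ J, colCount (pad n A) T ≤ ∑ T ∈ J, colCount B Tᶜ)) ∧
    ((∀ J : Finset (Finset (Fin c)),
        (∀ T ∈ J, ∀ S : Finset (Fin c), T ⊆ S → S ∈ J) →
        ∑ T ∈ J, colCount (pad n A) T ≤ ∑ T ∈ J, colCount B Tᶜ) ↔
      (∀ J : Finset (Finset (Fin c)),
        (∀ T ∈ J, ∀ S : Finset (Fin c), T ⊆ S → S ∈ J) →
        ∑ T ∈ J, colCount B T ≤ ∑ T ∈ J, colCount (pad n A) Tᶜ)) := by
  constructor
  · rw [matMon_mem_dual_iff (pad n A) B, not_not,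
      mem_symOrbit_iff_hall (pad n A) (fun j => (B j)ᶜ)]
    exact hall_iff_orderIdeal (pad n A) B
  · exact ⟨flip_ineq (pad n A) B, flip_ineq B (pad n A)⟩

end
end

section
/- (Exchange Lemma) Adopt the setting of the Alexander Dual Membership Criterion: A a 0-1 matrix with c rows and m ≤ n columns, k_T the number of columns of A with support T for nonempty T ⊆ [c] and k_∅ = n − Σ_{∅≠T} k_T, I_n ⊆ R_n the ideal generated by the Sym(n)-orbit of x^A, and B ∈ {0,1}^{c×n} with ℓ_T = ℓ_T(B). Let J be an order ideal of 2^[c] and assume x^B is a minimal generator of I_n^∨ satisfying Σ_{T∈J} ℓ_T > Σ_{T∈J} k_{T^c}. Then: (a) if ℓ_S > 0 for some S ∈ J, then S is a minimal element of J (there is no T ∈ J with T ⊊ S); (b) ℓ_U = 0 for every nonempty U ∈ 2^[c] − J, and ℓ_∅ = n − 1 − Σ_{T∈J} k_{T^c}. -/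
open MvPolynomial Finset

noncomputable section

/-- `x^B` is a minimal (monomial) generator of `I`: it lies in `I` and no proper monomial
divisor of it lies in `I`. -/
def IsMinGen (K : Type*) [CommSemiring K] {c n : ℕ}
    (I : Ideal (MvPolynomial (Fin c × Fin n) K)) (B : Fin n → Finset (Fin c)) : Prop :=
  matMon K B ∈ I ∧
    ∀ B'' : Fin n → Finset (Fin c), (∀ j, B'' j ⊆ B j) → B'' ≠ B → matMon K B'' ∉ I

namespace ExchangeAux

variable {K : Type*} [CommSemiring K] {c n : ℕ}

def expo (B : Fin n → Finset (Fin c)) : (Fin c × Fin n) →₀ ℕ :=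
  ∑ j : Fin n, ∑ i ∈ B j, Finsupp.single (i, j) 1

lemma prod_monomial {α : Type*} (s : Finset α) (f : α → ((Fin c × Fin n) →₀ ℕ)) :
    (∏ x ∈ s, (monomial (f x) (1 : K))) = monomial (∑ x ∈ s, f x) 1 := by
  induction s using Finset.cons_induction with
  | empty => simp
  | cons a s ha ih => rw [Finset.prod_cons, Finset.sum_cons, ih, monomial_mul, one_mul]

lemma matMon_eq (B : Fin n → Finset (Fin c)) : matMon K B = monomial (expo B) 1 := by
  unfold matMon expo
  rw [← prod_monomial]
  refine Finset.prod_congr rfl fun j _ => ?_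
  rw [← prod_monomial]
  rfl

lemma expo_apply (B : Fin n → Finset (Fin c)) (i : Fin c) (j : Fin n) :
    expo B (i, j) = if i ∈ B j then 1 else 0 := by
  unfold expo
  rw [Finsupp.finset_sum_apply]
  rw [Finset.sum_eq_single j]
  · rw [Finsupp.finset_sum_apply]
    by_cases hi : i ∈ B j
    · rw [if_pos hi, Finset.sum_eq_single_of_mem i hi]
      · simp [Finsupp.single_apply]
      · intro b _ hbi
        simp [Finsupp.single_apply, hbi]
    · rw [if_neg hi]
      apply Finset.sum_eq_zero
      intro x hx
      have : x ≠ i := fun h => hi (h ▸ hx)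
      simp [Finsupp.single_apply, this]
  · intro b _ hbj
    rw [Finsupp.finset_sum_apply]
    apply Finset.sum_eq_zero
    intro x _
    simp [Finsupp.single_apply, hbj]
  · simp

lemma expo_le_expo {Ba Bb : Fin n → Finset (Fin c)} (h : expo Ba ≤ expo Bb) (j : Fin n) :
    Ba j ⊆ Bb j := by
  intro i hi
  have := Finsupp.le_def.mp h (i, j)
  rw [expo_apply, expo_apply, if_pos hi] at this
  by_contra hcon
  rw [if_neg hcon] at this
  omega

end ExchangeAux

namespace ExchangeAux

variable {K : Type*} [CommSemiring K] {c n : ℕ}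

lemma rename_matMon (A : Fin n → Finset (Fin c)) (σ : Equiv.Perm (Fin n)) :
    rename (fun v : Fin c × Fin n => (v.1, σ v.2)) (matMon K A)
      = matMon K (fun j => A (σ.symm j)) := by
  unfold matMon
  rw [map_prod]
  simp only [map_prod, rename_X]
  rw [← Equiv.prod_comp σ (fun j => ∏ i ∈ A (σ.symm j), X (i, j))]
  simp

lemma symOrbitIdeal_eq (A : Fin n → Finset (Fin c)) :
    symOrbitIdeal K A = Ideal.span ((fun s => monomial s (1 : K)) ''
      {d | ∃ σ : Equiv.Perm (Fin n), d = expo fun j => A (σ.symm j)}) := by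
  unfold symOrbitIdeal
  congr 1
  ext p
  constructor
  · rintro ⟨σ, rfl⟩
    exact ⟨expo fun j => A (σ.symm j), ⟨σ, rfl⟩, by rw [rename_matMon, matMon_eq]⟩
  · rintro ⟨d, ⟨σ, rfl⟩, rfl⟩
    exact ⟨σ, by rw [rename_matMon, matMon_eq]⟩

lemma exists_perm_of_mem [Nontrivial K] {A C : Fin n → Finset (Fin c)}
    (h : matMon K C ∈ symOrbitIdeal K A) :
    ∃ σ : Equiv.Perm (Fin n), ∀ j, A (σ.symm j) ⊆ C j := by
  rw [symOrbitIdeal_eq, matMon_eq, mem_ideal_span_monomial_image] at h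
  classical
  have hs : expo C ∈ (monomial (expo C) (1 : K)).support := by
    rw [support_monomial, if_neg one_ne_zero]
    exact Finset.mem_singleton_self _
  obtain ⟨si, ⟨σ, rfl⟩, hle⟩ := h _ hs
  exact ⟨σ, fun j => expo_le_expo hle j⟩

lemma sum_colCount_eq (B : Fin n → Finset (Fin c)) (J : Finset (Finset (Fin c))) :
    ∑ T ∈ J, colCount B T = (univ.filter fun j => B j ∈ J).card := by
  rw [Finset.card_eq_sum_card_fiberwise (f := B) (t := J) (s := univ.filter fun j => B j ∈ J)
    (fun j hj => (mem_filter.mp hj).2)]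
  refine Finset.sum_congr rfl fun T hT => ?_
  unfold colCount
  congr 1
  rw [Finset.filter_filter]
  refine Finset.filter_congr fun j _ => ?_
  constructor
  · intro h
    exact ⟨by rw [h]; exact hT, h⟩
  · exact fun h => h.2

lemma sum_colCount_compl_eq (A : Fin n → Finset (Fin c)) (J : Finset (Finset (Fin c))) :
    ∑ T ∈ J, colCount A Tᶜ = (univ.filter fun j => (A j)ᶜ ∈ J).card := by
  rw [Finset.card_eq_sum_card_fiberwise (f := fun j => (A j)ᶜ) (t := J) (s := univ.filter fun j => (A j)ᶜ ∈ J)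
    (fun j hj => (mem_filter.mp hj).2)]
  refine Finset.sum_congr rfl fun T hT => ?_
  unfold colCount
  congr 1
  rw [Finset.filter_filter]
  refine Finset.filter_congr fun j _ => ?_
  constructor
  · intro h
    have h2 : (A j)ᶜ = T := by rw [h, compl_compl]
    exact ⟨by show (A j)ᶜ ∈ J; rw [h2]; exact hT, h2⟩
  · intro h
    rw [← h.2, compl_compl]

lemma not_mem_of_violation [Nontrivial K] {A B' : Fin n → Finset (Fin c)}
    {J : Finset (Finset (Fin c))}
    (hJ : ∀ T ∈ J, ∀ S : Finset (Fin c), T ⊆ S → S ∈ J)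
    (h : ∑ T ∈ J, colCount A Tᶜ < ∑ T ∈ J, colCount B' T) :
    matMon K (fun j => (B' j)ᶜ) ∉ symOrbitIdeal K A := by
  intro hmem
  obtain ⟨σ, hσ⟩ := exists_perm_of_mem hmem
  have hcard : (univ.filter fun j => B' j ∈ J).card ≤
      (univ.filter fun j => (A j)ᶜ ∈ J).card := by
    apply Finset.card_le_card_of_injOn (fun j => σ.symm j)
    · intro j hj
      simp only [Finset.mem_coe, mem_filter, mem_univ, true_and] at hj ⊢
      exact hJ _ hj _ (Finset.subset_compl_comm.mp (hσ j))
    · exact fun a _ b _ hab => σ.symm.injective hab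
  rw [sum_colCount_eq, sum_colCount_compl_eq] at h
  omega

lemma mem_dual_of_violation [Nontrivial K] {A B' : Fin n → Finset (Fin c)}
    {J : Finset (Finset (Fin c))}
    (hJ : ∀ T ∈ J, ∀ S : Finset (Fin c), T ⊆ S → S ∈ J)
    (h : ∑ T ∈ J, colCount A Tᶜ < ∑ T ∈ J, colCount B' T) :
    matMon K B' ∈ dualIdeal K (symOrbitIdeal K A) :=
  Ideal.subset_span ⟨B', not_mem_of_violation hJ h, rfl⟩

lemma exists_col {B : Fin n → Finset (Fin c)} {T : Finset (Fin c)}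
    (h : 0 < colCount B T) : ∃ j, B j = T := by
  obtain ⟨j, hj⟩ := Finset.card_pos.mp h
  exact ⟨j, (mem_filter.mp hj).2⟩

end ExchangeAux

/-- **Exchange Lemma.** -/
theorem exchange_lemma (K : Type*) [Field K] {c m n : ℕ} (hc : 0 < c) (hmn : m ≤ n)
    (A : Fin m → Finset (Fin c)) (B : Fin n → Finset (Fin c))
    (J : Finset (Finset (Fin c)))
    (hJ : ∀ T ∈ J, ∀ S : Finset (Fin c), T ⊆ S → S ∈ J)
    (hmin : IsMinGen K (dualIdeal K (symOrbitIdeal K (pad n A))) B)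
    (hineq : ∑ T ∈ J, colCount (pad n A) Tᶜ < ∑ T ∈ J, colCount B T) :
    (∀ S ∈ J, 0 < colCount B S → ∀ T ∈ J, ¬T ⊂ S) ∧
    (∀ U : Finset (Fin c), U ∉ J → U ≠ ∅ → colCount B U = 0) ∧
    colCount B ∅ + 1 + ∑ T ∈ J, colCount (pad n A) Tᶜ = n := by
  classical
  obtain ⟨-, hminB⟩ := hmin
  have key : ∀ B'' : Fin n → Finset (Fin c), (∀ j, B'' j ⊆ B j) → B'' ≠ B →
      ¬ (∑ T ∈ J, colCount (pad n A) Tᶜ < ∑ T ∈ J, colCount B'' T) :=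
    fun B'' hsub hne hviol => hminB B'' hsub hne (ExchangeAux.mem_dual_of_violation hJ hviol)
  have parta : ∀ S ∈ J, 0 < colCount B S → ∀ T ∈ J, ¬T ⊂ S := by
    intro S hS hpos T hT hTS
    obtain ⟨j₀, hj₀⟩ := ExchangeAux.exists_col hpos
    refine key (Function.update B j₀ T) (fun j => ?_) (fun hEq => ?_) ?_
    · rcases eq_or_ne j j₀ with rfl | hji
      · rw [Function.update_self, hj₀]; exact hTS.subset
      · rw [Function.update_of_ne hji]
    · apply hTS.ne
      have h1 := congrFun hEq j₀
      rwa [Function.update_self, hj₀] at h1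
    · have hsum : ∑ T' ∈ J, colCount (Function.update B j₀ T) T'
          = ∑ T' ∈ J, colCount B T' := by
        rw [ExchangeAux.sum_colCount_eq, ExchangeAux.sum_colCount_eq]
        congr 1
        refine Finset.filter_congr fun j _ => ?_
        rcases eq_or_ne j j₀ with rfl | hji
        · rw [Function.update_self, hj₀]; exact ⟨fun _ => hS, fun _ => hT⟩
        · rw [Function.update_of_ne hji]
      omega
  have hemp : ∅ ∉ J := by
    intro h0
    have hall : ∀ S : Finset (Fin c), S ∈ J := fun S => hJ ∅ h0 S (Finset.empty_subset S)
    have h1 : (univ.filter fun j => B j ∈ J).card ≤ n := by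
      calc (univ.filter fun j => B j ∈ J).card ≤ (univ : Finset (Fin n)).card :=
            Finset.card_filter_le _ _
        _ = n := by rw [Finset.card_univ, Fintype.card_fin]
    have h2 : (univ.filter fun j => (pad n A j)ᶜ ∈ J).card = n := by
      rw [Finset.filter_true_of_mem (fun j _ => hall _), Finset.card_univ, Fintype.card_fin]
    rw [ExchangeAux.sum_colCount_eq, ExchangeAux.sum_colCount_compl_eq] at hineq
    omega
  have partb : ∀ U : Finset (Fin c), U ∉ J → U ≠ ∅ → colCount B U = 0 := by
    intro U hU hUne
    by_contra hcon
    obtain ⟨j₀, hj₀⟩ := ExchangeAux.exists_col (Nat.pos_of_ne_zero hcon)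
    refine key (Function.update B j₀ ∅) (fun j => ?_) (fun hEq => ?_) ?_
    · rcases eq_or_ne j j₀ with rfl | hji
      · rw [Function.update_self]; exact Finset.empty_subset _
      · rw [Function.update_of_ne hji]
    · apply hUne
      have h1 := congrFun hEq j₀
      rw [Function.update_self, hj₀] at h1
      exact h1.symm
    · have hmono : ∑ T' ∈ J, colCount B T'
          ≤ ∑ T' ∈ J, colCount (Function.update B j₀ ∅) T' := by
        rw [ExchangeAux.sum_colCount_eq, ExchangeAux.sum_colCount_eq]
        apply Finset.card_le_card
        intro j hj
        simp only [mem_filter, mem_univ, true_and] at hj ⊢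
        have hji : j ≠ j₀ := by
          intro h
          subst h
          rw [hj₀] at hj
          exact hU hj
        rwa [Function.update_of_ne hji]
      omega
  have hle : ∑ T ∈ J, colCount B T ≤ ∑ T ∈ J, colCount (pad n A) Tᶜ + 1 := by
    by_contra hcon
    push_neg at hcon
    obtain ⟨S, hS, hSpos⟩ : ∃ S ∈ J, 0 < colCount B S := by
      by_contra hall
      push_neg at hall
      have hz : ∑ T ∈ J, colCount B T = 0 :=
        Finset.sum_eq_zero fun T hT => Nat.le_zero.mp (hall T hT)
      omega
    obtain ⟨j₀, hj₀⟩ := ExchangeAux.exists_col hSpos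
    refine key (Function.update B j₀ ∅) (fun j => ?_) (fun hEq => ?_) ?_
    · rcases eq_or_ne j j₀ with rfl | hji
      · rw [Function.update_self]; exact Finset.empty_subset _
      · rw [Function.update_of_ne hji]
    · have hSne : S ≠ ∅ := fun h => hemp (h ▸ hS)
      apply hSne
      have h1 := congrFun hEq j₀
      rw [Function.update_self, hj₀] at h1
      exact h1.symm
    · have hset : (univ.filter fun j => Function.update B j₀ ∅ j ∈ J)
          = (univ.filter fun j => B j ∈ J).erase j₀ := by
        ext j
        simp only [mem_filter, mem_erase, mem_univ, true_and]
        rcases eq_or_ne j j₀ with rfl | hji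
        · simp only [Function.update_self]
          exact ⟨fun h => absurd h hemp, fun h => absurd rfl h.1⟩
        · rw [Function.update_of_ne hji]
          exact ⟨fun h => ⟨hji, h⟩, fun h => h.2⟩
      have hj₀mem : j₀ ∈ univ.filter fun j => B j ∈ J :=
        mem_filter.mpr ⟨mem_univ _, by rw [hj₀]; exact hS⟩
      have hnew : ∑ T' ∈ J, colCount (Function.update B j₀ ∅) T'
          = ∑ T' ∈ J, colCount B T' - 1 := by
        rw [ExchangeAux.sum_colCount_eq, ExchangeAux.sum_colCount_eq, hset,
          Finset.card_erase_of_mem hj₀mem]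
      have hge1 : 1 ≤ ∑ T' ∈ J, colCount B T' := by omega
      omega
  have htotal : ∑ T ∈ (univ : Finset (Finset (Fin c))), colCount B T = n := by
    rw [ExchangeAux.sum_colCount_eq, Finset.filter_true_of_mem (fun j _ => Finset.mem_univ _),
      Finset.card_univ, Fintype.card_fin]
  have hsplit : ∑ T ∈ (univ : Finset (Finset (Fin c))), colCount B T
      = colCount B ∅ + ∑ T ∈ J, colCount B T := by
    rw [← Finset.sum_insert hemp]
    symm
    apply Finset.sum_subset (Finset.subset_univ _)
    intro T _ hT
    simp only [Finset.mem_insert, not_or] at hT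
    exact partb T hT.2 hT.1
  exact ⟨parta, partb, by omega⟩

end
end

section
/- Let k ∈ ℕ, let a = (a_T)_{∅≠T⊆[k]} be a tuple of integers, let U ⊆ 2^[k] and b = (b_T)_{T∈U} a tuple of integers, and let P = {x ∈ ℝ^k : Σ_{i∈T} x_i ≥ a_T for all nonempty T ⊆ [k], and Σ_{i∈T} x_i ≤ b_T for all T ∈ U}. If P is nonempty, then there exist finitely many pairwise disjoint sets C_1,…,C_t ⊆ ℝ^k, each of the form C = {x ∈ ℝ^k : x_i = c_i for i ∈ J and x_i ≥ c_i for i ∈ [k]−J} for some J ⊆ [k] and integers c_1,…,c_k (an orthant with integral apex), such that P ∩ ℤ^k = ⋃_{i=1}^t (C_i ∩ ℤ^k). -/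
open Finset

/-- The polyhedron `P_{a,b} ⊆ ℝ^k` cut out by `∑_{i∈T} x_i ≥ a_T` for all nonempty `T ⊆ [k]`
and `∑_{i∈T} x_i ≤ b_T` for `T ∈ U`. -/
def polyP (k : ℕ) (a : Finset (Fin k) → ℤ) (U : Finset (Finset (Fin k)))
    (b : Finset (Fin k) → ℤ) : Set (Fin k → ℝ) :=
  {x | (∀ T : Finset (Fin k), T ≠ ∅ → (a T : ℝ) ≤ ∑ i ∈ T, x i) ∧
    ∀ T ∈ U, ∑ i ∈ T, x i ≤ (b T : ℝ)}

/-- An orthant with integral apex: `{x : x_i = c_i for i ∈ J, x_i ≥ c_i for i ∉ J}`. -/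
def IsOrthant {k : ℕ} (C : Set (Fin k → ℝ)) : Prop :=
  ∃ (J : Finset (Fin k)) (c : Fin k → ℤ),
    C = {x | (∀ i ∈ J, x i = (c i : ℝ)) ∧ ∀ i ∉ J, (c i : ℝ) ≤ x i}

/-- The integer points `ℤ^k ⊆ ℝ^k`. -/
def intPts (k : ℕ) : Set (Fin k → ℝ) := {x | ∀ i, ∃ z : ℤ, x i = (z : ℝ)}

/-- **Cone decomposition.**  If `P_{a,b}` is nonempty, its integer points are the disjoint
union of the integer points of finitely many pairwise disjoint orthants with integral
apices. -/
theorem cone_decomposition (k : ℕ) (hk : 0 < k)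
    (a : Finset (Fin k) → ℤ) (U : Finset (Finset (Fin k))) (b : Finset (Fin k) → ℤ)
    (hne : (polyP k a U b).Nonempty) :
    ∃ (t : ℕ) (C : Fin t → Set (Fin k → ℝ)),
      (∀ i, IsOrthant (C i)) ∧
      (∀ i j : Fin t, i ≠ j → Disjoint (C i) (C j)) ∧
      polyP k a U b ∩ intPts k = ⋃ i : Fin t, C i ∩ intPts k := by
  classical
  clear hk hne
  set l : Fin k → ℤ := fun i => a {i} with hl
  have hAne : (Finset.univ.powerset : Finset (Finset (Fin k))).Nonempty := ⟨∅, by simp⟩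
  set F : Fin k → Finset (Fin k) → ℤ := fun i T =>
    if i ∈ T then
      max (a T - ∑ j ∈ T.erase i, l j)
        (if T ∈ U then b T - ∑ j ∈ T.erase i, l j + 1 else l i)
    else l i with hF
  set M : Fin k → ℤ := fun i => Finset.univ.powerset.sup' hAne (F i) with hMdef
  have hM1 : ∀ i, l i ≤ M i := by
    intro i
    have h := Finset.le_sup' (F i) (show (∅ : Finset (Fin k)) ∈ Finset.univ.powerset by simp)
    rw [hF] at h
    simp only [Finset.notMem_empty, if_false] at h
    exact h
  have hM2 : ∀ (i : Fin k) (T : Finset (Fin k)), i ∈ T →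
      a T - ∑ j ∈ T.erase i, l j ≤ M i := by
    intro i T hiT
    have h := Finset.le_sup' (F i) (show T ∈ Finset.univ.powerset by simp)
    rw [hF] at h
    simp only [if_pos hiT] at h
    exact le_trans (le_max_left _ _) h
  have hM3 : ∀ (i : Fin k) (T : Finset (Fin k)), i ∈ T → T ∈ U →
      b T - ∑ j ∈ T.erase i, l j + 1 ≤ M i := by
    intro i T hiT hTU
    have h := Finset.le_sup' (F i) (show T ∈ Finset.univ.powerset by simp)
    rw [hF] at h
    simp only [if_pos hiT, if_pos hTU] at h
    exact le_trans (le_max_right _ _) h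
  set J : (Fin k → ℤ) → Finset (Fin k) := fun c => Finset.univ.filter (fun i => c i < M i)
    with hJ
  set Cell : (Fin k → ℤ) → Set (Fin k → ℝ) := fun c =>
    {x | (∀ i ∈ J c, x i = (c i : ℝ)) ∧ ∀ i ∉ J c, (c i : ℝ) ≤ x i} with hCell
  set box : Finset (Fin k → ℤ) := Fintype.piFinset fun i => Finset.Icc (l i) (M i) with hbox
  have hboxmem : ∀ c ∈ box, ∀ i, l i ≤ c i ∧ c i ≤ M i := by
    intro c hc i
    rw [hbox, Fintype.mem_piFinset] at hc
    exact Finset.mem_Icc.mp (hc i)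
  have hJeq : ∀ c ∈ box, ∀ i ∉ J c, c i = M i := by
    intro c hc i hi
    rw [hJ] at hi
    simp only [Finset.mem_filter, Finset.mem_univ, true_and, not_lt] at hi
    exact le_antisymm ((hboxmem c hc i).2) hi
  -- the key invariance lemma
  have key : ∀ c ∈ box, ∀ x ∈ Cell c,
      (x ∈ polyP k a U b ↔ (fun i => ((c i : ℝ))) ∈ polyP k a U b) := by
    intro c hc x hx
    obtain ⟨hx1, hx2⟩ := hx
    have hcl : ∀ i, l i ≤ c i := fun i => (hboxmem c hc i).1
    have hxge : ∀ i, (c i : ℝ) ≤ x i := by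
      intro i
      by_cases h : i ∈ J c
      · rw [hx1 i h]
      · exact hx2 i h
    constructor
    · rintro ⟨hP1, hP2⟩
      have hxl : ∀ j, (l j : ℝ) ≤ x j := by
        intro j
        have h := hP1 {j} (Finset.singleton_ne_empty j)
        simpa [hl] using h
      have hTJ : ∀ T ∈ U, ∀ i ∈ T, i ∈ J c := by
        intro T hTU i hiT
        by_contra hiJ
        have hcM : c i = M i := hJeq c hc i hiJ
        have hMx : (M i : ℝ) ≤ x i := by
          rw [← hcM]; exact hxge i
        have hB : ((b T - ∑ j ∈ T.erase i, l j + 1 : ℤ) : ℝ) ≤ (M i : ℝ) := by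
          exact_mod_cast hM3 i T hiT hTU
        have hsum : ∑ j ∈ T, x j = x i + ∑ j ∈ T.erase i, x j :=
          (Finset.add_sum_erase T x hiT).symm
        have hD : ∑ j ∈ T.erase i, (l j : ℝ) ≤ ∑ j ∈ T.erase i, x j :=
          Finset.sum_le_sum fun j _ => hxl j
        have hP2T := hP2 T hTU
        push_cast at hB
        linarith
      constructor
      · intro T hT
        by_cases hsub : ∀ i ∈ T, i ∈ J c
        · have heq : ∑ i ∈ T, ((c i : ℝ)) = ∑ i ∈ T, x i :=
            Finset.sum_congr rfl (fun i hi => (hx1 i (hsub i hi)).symm)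
          rw [heq]
          exact hP1 T hT
        · push_neg at hsub
          obtain ⟨i, hiT, hiJ⟩ := hsub
          have h1 : a T - ∑ j ∈ T.erase i, l j ≤ M i := hM2 i T hiT
          have hz : a T ≤ ∑ j ∈ T, c j := by
            have hsum : ∑ j ∈ T, c j = c i + ∑ j ∈ T.erase i, c j :=
              (Finset.add_sum_erase T c hiT).symm
            have h2 : ∑ j ∈ T.erase i, l j ≤ ∑ j ∈ T.erase i, c j :=
              Finset.sum_le_sum fun j _ => hcl j
            have h3 : c i = M i := hJeq c hc i hiJ
            rw [hsum, h3]
            linarith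
          beta_reduce; exact_mod_cast hz
      · intro T hTU
        have heq : ∑ i ∈ T, ((c i : ℝ)) = ∑ i ∈ T, x i :=
          Finset.sum_congr rfl (fun i hi => (hx1 i (hTJ T hTU i hi)).symm)
        rw [heq]
        exact hP2 T hTU
    · rintro ⟨hP1, hP2⟩
      have hTJ : ∀ T ∈ U, ∀ i ∈ T, i ∈ J c := by
        intro T hTU i hiT
        by_contra hiJ
        have hcM : c i = M i := hJeq c hc i hiJ
        have hB : b T - ∑ j ∈ T.erase i, l j + 1 ≤ M i := hM3 i T hiT hTU
        have hP2T := hP2 T hTU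
        have hP2T' : ∑ j ∈ T, c j ≤ b T := by beta_reduce at hP2T; exact_mod_cast hP2T
        have hsum : ∑ j ∈ T, c j = c i + ∑ j ∈ T.erase i, c j :=
          (Finset.add_sum_erase T c hiT).symm
        have h2 : ∑ j ∈ T.erase i, l j ≤ ∑ j ∈ T.erase i, c j :=
          Finset.sum_le_sum fun j _ => hcl j
        rw [hsum, hcM] at hP2T'
        linarith
      constructor
      · intro T hT
        have h1 : ∑ i ∈ T, ((c i : ℝ)) ≤ ∑ i ∈ T, x i :=
          Finset.sum_le_sum fun i _ => hxge i
        exact le_trans (hP1 T hT) h1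
      · intro T hTU
        have heq : ∑ i ∈ T, x i = ∑ i ∈ T, ((c i : ℝ)) :=
          Finset.sum_congr rfl (fun i hi => hx1 i (hTJ T hTU i hi))
        rw [heq]
        exact hP2 T hTU
  -- selection of cells
  set S : Finset (Fin k → ℤ) :=
    box.filter (fun c => (fun i => ((c i : ℝ))) ∈ polyP k a U b) with hS
  refine ⟨S.card, fun j => Cell ((S.equivFin.symm j : S) : Fin k → ℤ), ?_, ?_, ?_⟩
  · intro j
    exact ⟨J _, _, rfl⟩
  · intro i j hij
    set c := ((S.equivFin.symm i : S) : Fin k → ℤ) with hc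
    set c' := ((S.equivFin.symm j : S) : Fin k → ℤ) with hc'
    have hcS : c ∈ S := (S.equivFin.symm i).2
    have hc'S : c' ∈ S := (S.equivFin.symm j).2
    have hcbox : c ∈ box := Finset.mem_of_mem_filter _ hcS
    have hc'box : c' ∈ box := Finset.mem_of_mem_filter _ hc'S
    have hne' : c ≠ c' := by
      intro h
      apply hij
      have : (S.equivFin.symm i : S) = (S.equivFin.symm j : S) := Subtype.ext h
      exact S.equivFin.symm.injective this
    obtain ⟨i0, hi0⟩ := Function.ne_iff.mp hne'
    rw [Set.disjoint_left]
    intro x hxc hxc'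
    obtain ⟨h1, h2⟩ := hxc
    obtain ⟨h1', h2'⟩ := hxc'
    by_cases hA : i0 ∈ J c <;> by_cases hB : i0 ∈ J c'
    · exact hi0 (by exact_mod_cast (h1 i0 hA).symm.trans (h1' i0 hB))
    · have e1 : x i0 = (c i0 : ℝ) := h1 i0 hA
      have e2 : (c' i0 : ℝ) ≤ x i0 := h2' i0 hB
      have e3 : c' i0 = M i0 := hJeq c' hc'box i0 hB
      have e4 : c i0 < M i0 := by
        rw [hJ] at hA
        simpa using hA
      rw [e1, e3] at e2
      have : M i0 ≤ c i0 := by exact_mod_cast e2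
      omega
    · have e1 : x i0 = (c' i0 : ℝ) := h1' i0 hB
      have e2 : (c i0 : ℝ) ≤ x i0 := h2 i0 hA
      have e3 : c i0 = M i0 := hJeq c hcbox i0 hA
      have e4 : c' i0 < M i0 := by
        rw [hJ] at hB
        simpa using hB
      rw [e1, e3] at e2
      have : M i0 ≤ c' i0 := by exact_mod_cast e2
      omega
    · have e3 : c i0 = M i0 := hJeq c hcbox i0 hA
      have e3' : c' i0 = M i0 := hJeq c' hc'box i0 hB
      exact hi0 (e3.trans e3'.symm)
  · ext x
    simp only [Set.mem_inter_iff, Set.mem_iUnion]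
    constructor
    · rintro ⟨hxP, hxI⟩
      choose z hz using hxI
      set c : Fin k → ℤ := fun i => min (z i) (M i) with hcdef
      have hzl : ∀ i, l i ≤ z i := by
        intro i
        have h := hxP.1 {i} (Finset.singleton_ne_empty i)
        rw [Finset.sum_singleton, hz i] at h
        exact_mod_cast h
      have hcbox : c ∈ box := by
        rw [hbox, Fintype.mem_piFinset]
        intro i
        rw [Finset.mem_Icc]
        constructor
        · exact le_min (hzl i) (hM1 i)
        · exact min_le_right _ _
      have hxCell : x ∈ Cell c := by
        constructor
        · intro i hi
          rw [hJ] at hi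
          simp only [Finset.mem_filter, Finset.mem_univ, true_and] at hi
          have : c i = z i := by
            rw [hcdef] at hi ⊢
            simp only at hi ⊢
            omega
          rw [this, hz i]
        · intro i _
          rw [hz i]
          exact_mod_cast min_le_left (z i) (M i)
      have hcsel : (fun i => ((c i : ℝ))) ∈ polyP k a U b := (key c hcbox x hxCell).mp hxP
      have hcS : c ∈ S := Finset.mem_filter.mpr ⟨hcbox, hcsel⟩
      refine ⟨S.equivFin ⟨c, hcS⟩, ?_, fun i => ⟨z i, hz i⟩⟩
      simpa using hxCell
    · rintro ⟨j, hxC, hxI⟩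
      set c := ((S.equivFin.symm j : S) : Fin k → ℤ) with hc
      have hcS : c ∈ S := (S.equivFin.symm j).2
      have hcbox : c ∈ box := Finset.mem_of_mem_filter _ hcS
      have hcsel : (fun i => ((c i : ℝ))) ∈ polyP k a U b :=
        (Finset.mem_filter.mp hcS).2
      exact ⟨(key c hcbox x hxC).mpr hcsel, hxI⟩
end

section
/- Let k ∈ ℕ, let a = (a_T)_{∅≠T⊆[k]} be a tuple of integers, let U ⊆ 2^[k] and b = (b_T)_{T∈U} a tuple of integers, and let P = {x ∈ ℝ^k : Σ_{i∈T} x_i ≥ a_T for all nonempty T ⊆ [k], and Σ_{i∈T} x_i ≤ b_T for all T ∈ U}. If P is nonempty, then there exist a polynomial p with rational coefficients of degree at most k−1 and an integer N such that for every integer n ≥ N, the (finite) cardinality of P ∩ ℤ^k ∩ {x ∈ ℝ^k : x_1 + ⋯ + x_k = n} equals p(n). -/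
open Finset

open Polynomial

/-- `f : ℤ → ℚ` eventually agrees with a polynomial of degree `< k`. -/
def EPlt (k : ℕ) (f : ℤ → ℚ) : Prop :=
  ∃ p : Polynomial ℚ, p.degree < (k : ℕ) ∧ ∃ N : ℤ, ∀ n : ℤ, N ≤ n → f n = p.eval (n : ℚ)

lemma EPlt.mono {k l : ℕ} {f : ℤ → ℚ} (h : EPlt k f) (hkl : k ≤ l) : EPlt l f := by
  obtain ⟨p, hp, N, hN⟩ := h
  exact ⟨p, lt_of_lt_of_le hp (by exact_mod_cast hkl), N, hN⟩

lemma EPlt.add {k : ℕ} {f g : ℤ → ℚ} (hf : EPlt k f) (hg : EPlt k g) :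
    EPlt k (fun n => f n + g n) := by
  obtain ⟨p, hp, N, hN⟩ := hf
  obtain ⟨q, hq, M, hM⟩ := hg
  refine ⟨p + q, lt_of_le_of_lt (degree_add_le p q) (max_lt hp hq), max N M, fun n hn => ?_⟩
  dsimp only
  rw [hN n (le_trans (le_max_left _ _) hn), hM n (le_trans (le_max_right _ _) hn), eval_add]

lemma EPlt.sub {k : ℕ} {f g : ℤ → ℚ} (hf : EPlt k f) (hg : EPlt k g) :
    EPlt k (fun n => f n - g n) := by
  obtain ⟨p, hp, N, hN⟩ := hf
  obtain ⟨q, hq, M, hM⟩ := hg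
  refine ⟨p - q, lt_of_le_of_lt (degree_sub_le p q) (max_lt hp hq), max N M, fun n hn => ?_⟩
  dsimp only
  rw [hN n (le_trans (le_max_left _ _) hn), hM n (le_trans (le_max_right _ _) hn), eval_sub]

lemma EPlt_sum {k : ℕ} {ι : Type*} (s : Finset ι) (f : ι → ℤ → ℚ)
    (h : ∀ i ∈ s, EPlt k (f i)) : EPlt k (fun n => ∑ i ∈ s, f i n) := by
  classical
  induction s using Finset.induction_on with
  | empty => exact ⟨0, by simp [bot_lt_iff_ne_bot], 0, fun n _ => by simp⟩
  | insert _ _ hx ih =>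
    rename_i a s
    simp only [Finset.sum_insert hx]
    exact (h a (mem_insert_self a s)).add (ih fun i hi => h i (mem_insert_of_mem hi))

lemma degree_comp_X_add_C_lt {p : Polynomial ℚ} {k : ℕ} (hp : p.degree < (k : ℕ)) (t : ℚ) :
    (p.comp (X + C t)).degree < (k : ℕ) := by
  rcases eq_or_ne (p.comp (X + C t)) 0 with h | h
  · rw [h, degree_zero]
    exact bot_lt_iff_ne_bot.2 (by simp)
  · have hp0 : p ≠ 0 := by rintro rfl; simp at h
    have hnd : (p.comp (X + C t)).natDegree = p.natDegree := by
      rw [natDegree_comp, natDegree_X_add_C, mul_one]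
    rw [← natDegree_lt_iff_degree_lt h, hnd, natDegree_lt_iff_degree_lt hp0]
    exact hp

lemma EPlt.shift {k : ℕ} {f : ℤ → ℚ} (h : EPlt k f) (t : ℤ) :
    EPlt k (fun n => f (n - t)) := by
  obtain ⟨p, hp, N, hN⟩ := h
  refine ⟨p.comp (X + C (-(t : ℚ))), degree_comp_X_add_C_lt hp _, N + t, fun n hn => ?_⟩
  dsimp only
  rw [hN (n - t) (by omega), eval_comp, eval_add, eval_X, eval_C, ← sub_eq_add_neg]
  push_cast
  rfl

lemma EPlt_of_poly {k : ℕ} {p : Polynomial ℚ} (hp : p.degree < (k : ℕ)) :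
    EPlt k (fun n => p.eval (n : ℚ)) := ⟨p, hp, 0, fun _ _ => rfl⟩

lemma EPlt_const {k : ℕ} (hk : 0 < k) (c : ℚ) : EPlt k (fun _ => c) := by
  refine ⟨C c, lt_of_le_of_lt degree_C_le ?_, 0, fun n _ => by simp⟩
  exact_mod_cast hk

lemma EPlt_congr {k : ℕ} {f g : ℤ → ℚ} (h : EPlt k f) (M : ℤ)
    (hfg : ∀ n : ℤ, M ≤ n → f n = g n) : EPlt k g := by
  obtain ⟨p, hp, N, hN⟩ := h
  exact ⟨p, hp, max N M, fun n hn => (hfg n (le_trans (le_max_right _ _) hn)).symm.trans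
    (hN n (le_trans (le_max_left _ _) hn))⟩

/-- Discrete antiderivative: `q(X+1) - q(X) = p`. -/
lemma exists_delta : ∀ (n : ℕ) (p : Polynomial ℚ), p.degree ≤ (n : ℕ) →
    ∃ q : Polynomial ℚ, q.degree ≤ ((n + 1 : ℕ) : WithBot ℕ) ∧ q.comp (X + C 1) - q = p := by
  intro n
  induction n with
  | zero =>
    intro p hp
    refine ⟨C (p.coeff 0) * X, ?_, ?_⟩
    · calc (C (p.coeff 0) * X).degree ≤ (C (p.coeff 0)).degree + X.degree := degree_mul_le _ _
        _ ≤ 0 + 1 := add_le_add degree_C_le degree_X_le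
        _ = ((1 : ℕ) : WithBot ℕ) := by rfl
    · rw [eq_C_of_degree_le_zero hp]
      simp [mul_comp, mul_add]
  | succ n ih =>
    intro p hp
    by_cases hpn : p.degree ≤ (n : ℕ)
    · obtain ⟨q, hq, hdq⟩ := ih p hpn
      exact ⟨q, le_trans hq (by exact_mod_cast (by omega : n + 1 ≤ n + 1 + 1)), hdq⟩
    · have hp0 : p ≠ 0 := by rintro rfl; exact hpn (by simp)
      have hd : p.natDegree = n + 1 := by
        have h1 : p.natDegree ≤ n + 1 := natDegree_le_iff_degree_le.2 hp
        have h2 : ¬ p.natDegree ≤ n := fun h => hpn (natDegree_le_iff_degree_le.1 h)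
        omega
      set c : ℚ := p.leadingCoeff / ((n : ℚ) + 2) with hc
      set u : Polynomial ℚ := (X + C 1) ^ (n + 2) - X ^ (n + 2) with hu
      have hXdeg : ((X + C 1 : Polynomial ℚ) ^ (n + 2)).degree = ((n + 2 : ℕ) : WithBot ℕ) := by
        rw [degree_pow, degree_X_add_C (1 : ℚ)]
        simp
      have hmonic : ((X + C 1 : Polynomial ℚ) ^ (n + 2)).Monic := (monic_X_add_C 1).pow _
      have hudeg : u.degree < ((n + 2 : ℕ) : WithBot ℕ) := by
        rw [hu, ← hXdeg]
        refine degree_sub_lt ?_ hmonic.ne_zero ?_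
        · rw [hXdeg, degree_X_pow]
        · rw [hmonic.leadingCoeff, (monic_X_pow _).leadingCoeff]
      have hucoeff : u.coeff (n + 1) = (n : ℚ) + 2 := by
        rw [hu, Polynomial.coeff_sub]
        rw [show (X + C 1 : Polynomial ℚ) = X + 1 by rw [C_1], coeff_X_add_one_pow,
          coeff_X_pow]
        rw [if_neg (by omega), Nat.choose_succ_self_right]
        push_cast
        ring
      set r : Polynomial ℚ := C c * u with hr
      have hrdeg : r.degree < ((n + 2 : ℕ) : WithBot ℕ) := by
        calc r.degree ≤ (C c).degree + u.degree := degree_mul_le _ _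
          _ ≤ 0 + u.degree := add_le_add degree_C_le le_rfl
          _ = u.degree := zero_add _
          _ < _ := hudeg
      have hcn2 : ((n : ℚ) + 2) ≠ 0 := by positivity
      have hp'coeff : (p - r).coeff (n + 1) = 0 := by
        rw [Polynomial.coeff_sub, hr, coeff_C_mul, hucoeff]
        rw [show p.coeff (n + 1) = p.leadingCoeff by rw [leadingCoeff, hd]]
        rw [hc, div_mul_cancel₀ _ hcn2, sub_self]
      have hp'deg : (p - r).degree ≤ (n : ℕ) := by
        rw [degree_le_iff_coeff_zero]
        intro m hm
        have hm' : n + 1 ≤ m := by exact_mod_cast Nat.cast_lt.1 (by exact_mod_cast hm)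
        rcases eq_or_lt_of_le hm' with rfl | hm2
        · exact hp'coeff
        · rw [Polynomial.coeff_sub]
          rw [coeff_eq_zero_of_degree_lt (lt_of_le_of_lt hp (by exact_mod_cast hm2)),
            coeff_eq_zero_of_degree_lt (lt_of_lt_of_le hrdeg (by exact_mod_cast hm2)),
            sub_self]
      obtain ⟨q', hq'deg, hq'⟩ := ih (p - r) hp'deg
      refine ⟨C c * X ^ (n + 2) + q', ?_, ?_⟩
      · refine le_trans (degree_add_le _ _) (max_le ?_ ?_)
        · calc (C c * X ^ (n + 2)).degree ≤ (C c).degree + (X ^ (n + 2) : Polynomial ℚ).degree :=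
              degree_mul_le _ _
            _ ≤ 0 + ((n + 2 : ℕ) : WithBot ℕ) := add_le_add degree_C_le (by rw [degree_X_pow])
            _ = ((n + 2 : ℕ) : WithBot ℕ) := zero_add _
        · exact le_trans hq'deg (by exact_mod_cast (by omega : n + 1 ≤ n + 2))
      · have hexp : (C c * X ^ (n + 2) + q').comp (X + C 1) =
            C c * (X + C 1) ^ (n + 2) + q'.comp (X + C 1) := by
          simp [add_comp, mul_comp, pow_comp]
        rw [hexp]
        have : C c * (X + C 1) ^ (n + 2) + q'.comp (X + C 1) - (C c * X ^ (n + 2) + q') =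
            C c * u + (q'.comp (X + C 1) - q') := by rw [hu]; ring
        rw [this, hq', ← hr]
        ring

lemma sum_Ioc_eval {k : ℕ} (p : Polynomial ℚ) (hp : p.degree < (k : ℕ)) (c : ℤ) :
    ∃ Q : Polynomial ℚ, Q.degree < ((k + 1 : ℕ) : WithBot ℕ) ∧
      ∀ n : ℤ, c ≤ n → ∑ m ∈ Finset.Ioc c n, p.eval (m : ℚ) = Q.eval (n : ℚ) := by
  rcases eq_or_ne p 0 with rfl | hp0
  · exact ⟨0, by simp [bot_lt_iff_ne_bot], fun n _ => by simp⟩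
  · obtain ⟨q, hqdeg, hdq⟩ := exists_delta p.natDegree p degree_le_natDegree
    have hnd : p.natDegree < k := (natDegree_lt_iff_degree_lt hp0).2 hp
    have hqlt : q.degree < ((k + 1 : ℕ) : WithBot ℕ) :=
      lt_of_le_of_lt hqdeg (by exact_mod_cast (by omega : p.natDegree + 1 < k + 1))
    have heval : ∀ x : ℚ, p.eval x = q.eval (x + 1) - q.eval x := by
      intro x
      have := congrArg (eval x) hdq
      simpa [eval_comp] using this.symm
    have key : ∀ n : ℤ, c ≤ n → ∑ m ∈ Finset.Ioc c n, p.eval (m : ℚ) =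
        q.eval ((n : ℚ) + 1) - q.eval ((c : ℚ) + 1) := by
      intro n hn
      refine Int.le_induction (motive := fun n _ => ∑ m ∈ Finset.Ioc c n, p.eval (m : ℚ) =
          q.eval ((n : ℚ) + 1) - q.eval ((c : ℚ) + 1)) ?_ ?_ n hn
      · simp
      · intro n hn ihn
        have hins : Finset.Ioc c (n + 1) = insert (n + 1) (Finset.Ioc c n) := by
          ext m; simp only [Finset.mem_Ioc, Finset.mem_insert]; omega
        have hnot : (n + 1) ∉ Finset.Ioc c n := by simp
        rw [hins, Finset.sum_insert hnot, ihn, heval]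
        push_cast
        ring
    refine ⟨q.comp (X + C 1) - C (q.eval ((c : ℚ) + 1)), ?_, ?_⟩
    · refine lt_of_le_of_lt (degree_sub_le _ _) (max_lt (degree_comp_X_add_C_lt hqlt 1) ?_)
      exact lt_of_le_of_lt degree_C_le (by exact_mod_cast (by omega : 0 < k + 1))
    · intro n hn
      rw [key n hn]
      simp [eval_comp]

/-- Integer points of the lower-bounds-only polyhedron on the hyperplane `∑ = n`. -/
def sliceS (k : ℕ) (a : Finset (Fin k) → ℤ) (n : ℤ) : Set (Fin k → ℤ) :=
  {y | (∀ T : Finset (Fin k), T ≠ ∅ → a T ≤ ∑ i ∈ T, y i) ∧ ∑ i, y i = n}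

lemma sliceS_finite (k : ℕ) (a : Finset (Fin k) → ℤ) (n : ℤ) : (sliceS k a n).Finite := by
  classical
  apply Set.Finite.subset (Set.Finite.pi (t := fun i : Fin k =>
    Set.Icc (a {i}) (n - ∑ j ∈ Finset.univ.erase i, a {j})) fun i => Set.finite_Icc _ _)
  rintro y ⟨h1, h2⟩
  rw [Set.mem_pi]
  intro i _
  rw [Set.mem_Icc]
  have hlo : ∀ j : Fin k, a {j} ≤ y j := by
    intro j; simpa using h1 {j} (by simp)
  have hkey := Finset.sum_erase_add Finset.univ y (Finset.mem_univ i)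
  rw [h2] at hkey
  have hle : ∑ j ∈ Finset.univ.erase i, a {j} ≤ ∑ j ∈ Finset.univ.erase i, y j :=
    Finset.sum_le_sum fun j _ => hlo j
  exact ⟨hlo i, by omega⟩

/-- The number of points of `sliceS`. -/
noncomputable def cnt (k : ℕ) (a : Finset (Fin k) → ℤ) (n : ℤ) : ℕ := (sliceS k a n).ncard

lemma sum_Ioc_split (f : ℤ → ℚ) {a b c : ℤ} (hab : a ≤ b) (hbc : b ≤ c) :
    ∑ i ∈ Finset.Ioc a c, f i = ∑ i ∈ Finset.Ioc a b, f i + ∑ i ∈ Finset.Ioc b c, f i := by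
  rw [← Finset.sum_union (by
    rw [Finset.disjoint_left]
    intro m hm1 hm2
    rw [Finset.mem_Ioc] at hm1 hm2
    omega), Finset.Ioc_union_Ioc_eq_Ioc hab hbc]

theorem cnt_EPlt : ∀ (k : ℕ) (a : Finset (Fin k) → ℤ), EPlt k (fun n => (cnt k a n : ℚ)) := by
  intro k
  induction k with
  | zero =>
    intro a
    refine ⟨0, by simp [bot_lt_iff_ne_bot], 1, fun n hn => ?_⟩
    have h : sliceS 0 a n = ∅ := by
      ext y
      simp only [sliceS, Set.mem_setOf_eq, Set.mem_empty_iff_false, iff_false, not_and]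
      intro _
      simp only [Finset.univ_eq_empty, Finset.sum_empty]
      omega
    simp [cnt, h]
  | succ k ih =>
    intro a
    classical
    set emb : Fin k ↪ Fin (k + 1) := ⟨Fin.succ, Fin.succ_injective k⟩ with hemb
    set A : Finset (Fin k) → ℤ := fun S => a (S.map emb) with hA
    set B : Finset (Fin k) → ℤ := fun S => a (insert 0 (S.map emb)) with hB
    set a' : ℤ → Finset (Fin k) → ℤ := fun t S => max (A S) (B S - t) with ha'
    set a0 : ℤ := a {0} with ha0
    obtain ⟨M0, hM0⟩ : ∃ m : ℤ, m = if k = 0 then 0 else A Finset.univ := ⟨_, rfl⟩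
    have hmap_erase : ∀ T : Finset (Fin (k + 1)),
        (T.preimage Fin.succ (Fin.succ_injective k).injOn).map emb = T.erase 0 := by
      intro T; ext i
      simp only [Finset.mem_map, Finset.mem_preimage, Finset.mem_erase, hemb,
        Function.Embedding.coeFn_mk]
      constructor
      · rintro ⟨j, hj, rfl⟩; exact ⟨Fin.succ_ne_zero j, hj⟩
      · rintro ⟨h0, hT⟩
        obtain ⟨j, rfl⟩ := Fin.exists_succ_eq.2 h0
        exact ⟨j, hT, rfl⟩
    have h0notmap : ∀ S : Finset (Fin k), (0 : Fin (k + 1)) ∉ S.map emb := by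
      intro S h
      simp only [Finset.mem_map, hemb, Function.Embedding.coeFn_mk] at h
      obtain ⟨j, _, hj⟩ := h
      exact Fin.succ_ne_zero j hj
    have hsum_map : ∀ (S : Finset (Fin k)) (x : Fin (k + 1) → ℤ),
        ∑ i ∈ S.map emb, x i = ∑ j ∈ S, x j.succ := by
      intro S x
      rw [Finset.sum_map]
      rfl
    have hcons_sum : ∀ (t : ℤ) (y : Fin k → ℤ) (S : Finset (Fin k)),
        ∑ j ∈ S, (Fin.cons t y : Fin (k + 1) → ℤ) j.succ = ∑ j ∈ S, y j :=
      fun t y S => Finset.sum_congr rfl fun j _ => by simp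
    -- membership characterization
    have hmem : ∀ (n t : ℤ) (y : Fin k → ℤ), a0 ≤ t →
        ((Fin.cons t y : Fin (k + 1) → ℤ) ∈ sliceS (k + 1) a n ↔
          y ∈ sliceS k (a' t) (n - t)) := by
      intro n t y ht
      have htot : ∑ i, (Fin.cons t y : Fin (k + 1) → ℤ) i = t + ∑ j, y j := by
        rw [Fin.sum_univ_succ]
        rw [Fin.cons_zero, hcons_sum]
      constructor
      · rintro ⟨h1, h2⟩
        rw [htot] at h2
        refine ⟨?_, by omega⟩
        intro S hS
        have hA' : A S ≤ ∑ j ∈ S, y j := by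
          have := h1 (S.map emb) (by simpa [Finset.map_eq_empty] using hS)
          rwa [hsum_map, hcons_sum] at this
        have hB' : B S - t ≤ ∑ j ∈ S, y j := by
          have h := h1 (insert 0 (S.map emb)) (Finset.insert_ne_empty _ _)
          rw [Finset.sum_insert (h0notmap S), Fin.cons_zero, hsum_map, hcons_sum] at h
          have h' : B S ≤ t + ∑ j ∈ S, y j := h
          omega
        exact max_le hA' hB'
      · rintro ⟨h1, h2⟩
        refine ⟨?_, by rw [htot]; omega⟩
        intro T hT
        by_cases h0 : (0 : Fin (k + 1)) ∈ T
        · set S := T.preimage Fin.succ (Fin.succ_injective k).injOn with hS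
          have hT' : T = insert 0 (S.map emb) := by
            rw [hS, hmap_erase, Finset.insert_erase h0]
          by_cases hSe : S = ∅
          · rw [hT', hSe, Finset.map_empty, Finset.insert_empty, Finset.sum_singleton,
              Fin.cons_zero]
            exact ht
          · rw [hT', Finset.sum_insert (h0notmap S), Fin.cons_zero, hsum_map, hcons_sum]
            have hmax := h1 S hSe
            have hBle : B S - t ≤ ∑ j ∈ S, y j := le_trans (le_max_right _ _) hmax
            show B S ≤ t + ∑ j ∈ S, y j
            omega
        · set S := T.preimage Fin.succ (Fin.succ_injective k).injOn with hS
          have hT' : T = S.map emb := by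
            rw [hS, hmap_erase, Finset.erase_eq_of_notMem h0]
          have hSe : S ≠ ∅ := by
            intro h
            rw [hT', h] at hT
            simp at hT
          rw [hT', hsum_map, hcons_sum]
          exact le_trans (le_max_left _ _) (h1 S hSe)
    -- the fiberwise recursion
    have hrec : ∀ n : ℤ, cnt (k + 1) a n = ∑ t ∈ Finset.Icc a0 (n - M0), cnt k (a' t) (n - t) := by
      intro n
      have hO : (sliceS (k + 1) a n).Finite := sliceS_finite _ _ _
      have hmemIcc : ∀ x ∈ hO.toFinset, x 0 ∈ Finset.Icc a0 (n - M0) := by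
        intro x hx
        rw [Set.Finite.mem_toFinset] at hx
        obtain ⟨h1, h2⟩ := hx
        rw [Finset.mem_Icc]
        have hsplit : ∑ i, x i = x 0 + ∑ j : Fin k, x j.succ := Fin.sum_univ_succ x
        rw [h2] at hsplit
        constructor
        · simpa using h1 {0} (by simp)
        · by_cases hk0 : k = 0
          · subst hk0
            rw [hM0, if_pos rfl]
            have hz : ∑ j : Fin 0, x (Fin.succ j) = 0 := by simp
            omega
          · have hne : (Finset.univ : Finset (Fin k)).map emb ≠ ∅ := by
              intro h
              rw [Finset.map_eq_empty] at h
              exact (@Finset.univ_nonempty _ _ ⟨⟨0, Nat.pos_of_ne_zero hk0⟩⟩).ne_empty h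
            have hAu := h1 _ hne
            rw [hsum_map] at hAu
            have hAu' : A Finset.univ ≤ ∑ j : Fin k, x j.succ := hAu
            rw [hM0, if_neg hk0]
            omega
      have card1 : hO.toFinset.card =
          ∑ t ∈ Finset.Icc a0 (n - M0), (hO.toFinset.filter (fun x => x 0 = t)).card :=
        Finset.card_eq_sum_card_fiberwise hmemIcc
      have card2 : ∀ t ∈ Finset.Icc a0 (n - M0),
          (hO.toFinset.filter (fun x => x 0 = t)).card = cnt k (a' t) (n - t) := by
        intro t htI
        have ht : a0 ≤ t := (Finset.mem_Icc.1 htI).1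
        have hset : (↑(hO.toFinset.filter (fun x => x 0 = t)) : Set (Fin (k + 1) → ℤ)) =
            Fin.cons t '' sliceS k (a' t) (n - t) := by
          ext x
          simp only [Finset.coe_filter, Set.mem_setOf_eq, Set.Finite.mem_toFinset,
            Set.mem_image]
          constructor
          · rintro ⟨hxO, hx0⟩
            have hx' : (Fin.cons t (Fin.tail x) : Fin (k + 1) → ℤ) = x := by
              rw [← hx0]
              exact Fin.cons_self_tail x
            refine ⟨Fin.tail x, ?_, hx'⟩
            rw [← hmem n t (Fin.tail x) ht, hx']
            exact hxO
          · rintro ⟨y, hy, rfl⟩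
            exact ⟨(hmem n t y ht).2 hy, Fin.cons_zero _ _⟩
        have hc := congrArg Set.ncard hset
        rw [Set.ncard_coe_finset,
          Set.ncard_image_of_injective _ (Fin.cons_right_injective (α := fun _ : Fin (k + 1) => ℤ) t)] at hc
        exact hc
      rw [cnt, Set.ncard_eq_toFinset_card _ hO, card1]
      exact Finset.sum_congr rfl card2
    -- stabilization threshold
    have hUne : (Finset.univ : Finset (Finset (Fin k))).Nonempty := ⟨∅, Finset.mem_univ _⟩
    obtain ⟨t0, ht0a, ht0sup⟩ : ∃ t0 : ℤ, a0 ≤ t0 ∧ ∀ S : Finset (Fin k), B S - A S ≤ t0 :=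
      ⟨max a0 (Finset.sup' Finset.univ hUne fun S => B S - A S), le_max_left _ _,
        fun S => le_trans (Finset.le_sup' (fun S => B S - A S) (Finset.mem_univ S))
          (le_max_right _ _)⟩
    have ht0B : ∀ t : ℤ, t0 ≤ t → a' t = A := by
      intro t ht
      funext S
      have hle : B S - A S ≤ t0 := ht0sup S
      show max (A S) (B S - t) = A S
      exact max_eq_left (by omega)
    obtain ⟨pA, hpA, NA, hNA⟩ := ih A
    obtain ⟨NA', hNA'1, hNA'2⟩ : ∃ m : ℤ, NA ≤ m ∧ M0 ≤ m :=
      ⟨max NA M0, le_max_left _ _, le_max_right _ _⟩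
    obtain ⟨Q, hQdeg, hQ⟩ := sum_Ioc_eval pA hpA (NA' - 1)
    set g : ℤ → ℚ := fun n =>
      (∑ t ∈ Finset.Icc a0 (t0 - 1), (cnt k (a' t) (n - t) : ℚ)) +
      ((∑ m ∈ Finset.Ioc (M0 - 1) (NA' - 1), (cnt k A m : ℚ)) +
        Q.eval ((n - t0 : ℤ) : ℚ)) with hg
    have hgE : EPlt (k + 1) g := by
      refine EPlt.add ?_ (EPlt.add ?_ ?_)
      · exact EPlt_sum _ _ fun t _ => ((ih (a' t)).shift t).mono (Nat.le_succ k)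
      · exact EPlt_const (Nat.succ_pos k) _
      · exact (EPlt_of_poly (p := Q) (by exact_mod_cast hQdeg)).shift t0
    refine EPlt_congr hgE (max (t0 - 1 + M0) (t0 + NA' - 1)) ?_
    intro n hn
    have hna := le_trans (le_max_left (t0 - 1 + M0) (t0 + NA' - 1)) hn
    have hnb := le_trans (le_max_right (t0 - 1 + M0) (t0 + NA' - 1)) hn
    have hn1 : t0 - 1 ≤ n - M0 := by omega
    have hn2 : NA' - 1 ≤ n - t0 := by omega
    have e1 : ((cnt (k + 1) a n : ℚ)) = ∑ t ∈ Finset.Icc a0 (n - M0), (cnt k (a' t) (n - t) : ℚ) := by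
      rw [hrec n]
      push_cast
      rfl
    have hIoc1 : Finset.Icc a0 (n - M0) = Finset.Ioc (a0 - 1) (n - M0) := by
      ext m; simp only [Finset.mem_Icc, Finset.mem_Ioc]; omega
    have hIoc2 : Finset.Icc a0 (t0 - 1) = Finset.Ioc (a0 - 1) (t0 - 1) := by
      ext m; simp only [Finset.mem_Icc, Finset.mem_Ioc]; omega
    have e2 : ∑ t ∈ Finset.Icc a0 (n - M0), (cnt k (a' t) (n - t) : ℚ) =
        (∑ t ∈ Finset.Icc a0 (t0 - 1), (cnt k (a' t) (n - t) : ℚ)) +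
        ∑ t ∈ Finset.Ioc (t0 - 1) (n - M0), (cnt k (a' t) (n - t) : ℚ) := by
      rw [hIoc1, hIoc2]
      exact sum_Ioc_split _ (by omega : a0 - 1 ≤ t0 - 1) hn1
    have e3 : ∑ t ∈ Finset.Ioc (t0 - 1) (n - M0), (cnt k (a' t) (n - t) : ℚ) =
        ∑ m ∈ Finset.Ioc (M0 - 1) (n - t0), (cnt k A m : ℚ) := by
      rw [Finset.sum_congr rfl (fun t htm => by
        rw [ht0B t (by have := Finset.mem_Ioc.1 htm; omega)])]
      refine Finset.sum_nbij' (i := fun t => n - t) (j := fun m => n - m) ?_ ?_ ?_ ?_ ?_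
      · intro t htm
        have h := Finset.mem_Ioc.1 htm
        rw [Finset.mem_Ioc]
        show M0 - 1 < n - t ∧ n - t ≤ n - t0
        omega
      · intro m hm
        have h := Finset.mem_Ioc.1 hm
        rw [Finset.mem_Ioc]
        show t0 - 1 < n - m ∧ n - m ≤ n - M0
        omega
      · intro t _
        show n - (n - t) = t
        omega
      · intro m _
        show n - (n - m) = m
        omega
      · intro t _; rfl
    have e4 : ∑ m ∈ Finset.Ioc (M0 - 1) (n - t0), (cnt k A m : ℚ) =
        (∑ m ∈ Finset.Ioc (M0 - 1) (NA' - 1), (cnt k A m : ℚ)) +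
        ∑ m ∈ Finset.Ioc (NA' - 1) (n - t0), (cnt k A m : ℚ) :=
      sum_Ioc_split _ (by omega : M0 - 1 ≤ NA' - 1) hn2
    have e5 : ∑ m ∈ Finset.Ioc (NA' - 1) (n - t0), (cnt k A m : ℚ) =
        Q.eval ((n - t0 : ℤ) : ℚ) := by
      rw [Finset.sum_congr rfl (fun m hm => hNA m (by have := Finset.mem_Ioc.1 hm; omega))]
      exact hQ (n - t0) (by omega)
    rw [hg]
    dsimp only
    rw [← e5, ← e4, ← e3, ← e2, ← e1]

/-- Integer points of the polyhedron with upper bounds, on the hyperplane `∑ = n`. -/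
def sliceU (k : ℕ) (a : Finset (Fin k) → ℤ) (U : Finset (Finset (Fin k)))
    (b : Finset (Fin k) → ℤ) (n : ℤ) : Set (Fin k → ℤ) :=
  {y | (∀ T : Finset (Fin k), T ≠ ∅ → a T ≤ ∑ i ∈ T, y i) ∧
    (∀ T ∈ U, ∑ i ∈ T, y i ≤ b T) ∧ ∑ i, y i = n}

lemma sliceU_finite (k : ℕ) (a : Finset (Fin k) → ℤ) (U : Finset (Finset (Fin k)))
    (b : Finset (Fin k) → ℤ) (n : ℤ) : (sliceU k a U b n).Finite :=
  (sliceS_finite k a n).subset fun _ hy => ⟨hy.1, hy.2.2⟩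

theorem cntU_EPlt (k : ℕ) (b : Finset (Fin k) → ℤ) :
    ∀ U : Finset (Finset (Fin k)), (∀ T ∈ U, T = ∅ → 0 ≤ b T) →
      ∀ a : Finset (Fin k) → ℤ, EPlt k (fun n => ((sliceU k a U b n).ncard : ℚ)) := by
  classical
  intro U
  induction U using Finset.induction_on with
  | empty =>
    intro _ a
    have heq : ∀ n : ℤ, sliceU k a ∅ b n = sliceS k a n := by
      intro n; ext y
      simp only [sliceU, sliceS, Set.mem_setOf_eq, Finset.notMem_empty, false_implies,
        implies_true, true_and]
    refine EPlt_congr (cnt_EPlt k a) 0 (fun n _ => ?_)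
    rw [show cnt k a n = (sliceU k a ∅ b n).ncard by rw [cnt, heq n]]
  | insert _ _ hTU _ =>
    rename_i T U ihU
    intro hb a
    have hbU : ∀ T' ∈ U, T' = ∅ → 0 ≤ b T' := fun T' h => hb T' (Finset.mem_insert_of_mem h)
    by_cases hT : T = ∅
    · subst hT
      have h0b : (0 : ℤ) ≤ b ∅ := hb ∅ (Finset.mem_insert_self _ _) rfl
      have heq : ∀ n : ℤ, sliceU k a (insert ∅ U) b n = sliceU k a U b n := by
        intro n; ext y
        simp only [sliceU, Set.mem_setOf_eq]
        constructor
        · rintro ⟨h1, h2, h3⟩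
          exact ⟨h1, fun T' hT' => h2 T' (Finset.mem_insert_of_mem hT'), h3⟩
        · rintro ⟨h1, h2, h3⟩
          refine ⟨h1, ?_, h3⟩
          intro T' hT'
          rcases Finset.mem_insert.1 hT' with rfl | h
          · simpa using h0b
          · exact h2 T' h
      exact EPlt_congr (ihU hbU a) 0 (fun n _ => by rw [heq n])
    · obtain ⟨a2, ha2⟩ : ∃ f, f = Function.update a T (max (a T) (b T + 1)) := ⟨_, rfl⟩
      have key : ∀ n : ℤ, (sliceU k a U b n).ncard =
          (sliceU k a (insert T U) b n).ncard + (sliceU k a2 U b n).ncard := by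
        intro n
        have hunion : sliceU k a U b n = sliceU k a (insert T U) b n ∪ sliceU k a2 U b n := by
          ext y
          simp only [sliceU, Set.mem_setOf_eq, Set.mem_union]
          constructor
          · rintro ⟨h1, h2, h3⟩
            by_cases hle : ∑ i ∈ T, y i ≤ b T
            · left
              refine ⟨h1, ?_, h3⟩
              intro T' hT'
              rcases Finset.mem_insert.1 hT' with rfl | h
              · exact hle
              · exact h2 _ h
            · right
              refine ⟨?_, h2, h3⟩
              intro T' hT'
              by_cases hTT : T' = T
              · subst hTT
                rw [ha2, Function.update_self]
                exact max_le (h1 T' hT') (by omega)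
              · rw [ha2, Function.update_of_ne hTT]
                exact h1 T' hT'
          · rintro (⟨h1, h2, h3⟩ | ⟨h1, h2, h3⟩)
            · exact ⟨h1, fun T' hT' => h2 T' (Finset.mem_insert_of_mem hT'), h3⟩
            · refine ⟨?_, h2, h3⟩
              intro T' hT'
              have hh := h1 T' hT'
              by_cases hTT : T' = T
              · subst hTT
                rw [ha2, Function.update_self] at hh
                exact le_trans (le_max_left _ _) hh
              · rwa [ha2, Function.update_of_ne hTT] at hh
        have hdisj : Disjoint (sliceU k a (insert T U) b n) (sliceU k a2 U b n) := by
          rw [Set.disjoint_left]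
          rintro y ⟨h1, h2, h3⟩ ⟨g1, g2, g3⟩
          have hle := h2 T (Finset.mem_insert_self _ _)
          have hge := g1 T hT
          rw [ha2, Function.update_self] at hge
          have := le_trans (le_max_right _ _) hge
          omega
        rw [hunion, Set.ncard_union_eq hdisj (sliceU_finite _ _ _ _ _) (sliceU_finite _ _ _ _ _)]
      refine EPlt_congr ((ihU hbU a).sub (ihU hbU a2)) 0 (fun n _ => ?_)
      beta_reduce
      rw [key n]
      push_cast
      ring

/-- **Ehrhart-type counting.**  If `P_{a,b}` is nonempty, then there is a rational polynomial
`p` of degree at most `k − 1` such that for every sufficiently large integer `n`, the number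
of integer points of `P_{a,b}` lying on the hyperplane `x_1 + ⋯ + x_k = n` is finite and
equals `p(n)`. -/
theorem polyhedron_slice_count_polynomial (k : ℕ) (hk : 0 < k)
    (a : Finset (Fin k) → ℤ) (U : Finset (Finset (Fin k))) (b : Finset (Fin k) → ℤ)
    (hne : (polyP k a U b).Nonempty) :
    ∃ (p : Polynomial ℚ) (N : ℤ), p.degree ≤ (k - 1 : ℕ) ∧
      ∀ n : ℤ, N ≤ n →
        (polyP k a U b ∩ intPts k ∩ {x | ∑ i, x i = (n : ℝ)}).Finite ∧
        ((polyP k a U b ∩ intPts k ∩ {x | ∑ i, x i = (n : ℝ)}).ncard : ℚ) =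
          p.eval (n : ℚ) := by
  classical
  have hb : ∀ T ∈ U, T = ∅ → 0 ≤ b T := by
    intro T hT hTe
    obtain ⟨x, hx⟩ := hne
    have h := hx.2 T hT
    subst hTe
    simp only [Finset.sum_empty] at h
    exact_mod_cast h
  obtain ⟨p, hpdeg, N, hp⟩ := cntU_EPlt k b U hb a
  have hinj : Function.Injective (fun (y : Fin k → ℤ) (i : Fin k) => ((y i : ℤ) : ℝ)) := by
    intro y1 y2 h
    funext i
    exact_mod_cast show ((y1 i : ℤ) : ℝ) = ((y2 i : ℤ) : ℝ) from congrFun h i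
  refine ⟨p, N, ?_, ?_⟩
  · rcases eq_or_ne p 0 with rfl | hp0
    · simp
    · rw [← Polynomial.natDegree_le_iff_degree_le]
      have := (Polynomial.natDegree_lt_iff_degree_lt hp0).2 hpdeg
      omega
  · intro n hn
    have himg : polyP k a U b ∩ intPts k ∩ {x | ∑ i, x i = (n : ℝ)} =
        (fun (y : Fin k → ℤ) (i : Fin k) => ((y i : ℤ) : ℝ)) '' sliceU k a U b n := by
      ext x
      simp only [Set.mem_inter_iff, Set.mem_image, Set.mem_setOf_eq, polyP, intPts, sliceU]
      constructor
      · rintro ⟨⟨⟨hge, hleq⟩, hint⟩, hsum⟩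
        choose z hz using hint
        have hxz : x = fun i => ((z i : ℤ) : ℝ) := funext hz
        subst hxz
        refine ⟨z, ⟨?_, ?_, ?_⟩, rfl⟩
        · intro T hT
          have := hge T hT
          beta_reduce at this
          exact_mod_cast this
        · intro T hT
          have := hleq T hT
          beta_reduce at this
          exact_mod_cast this
        · beta_reduce at hsum
          exact_mod_cast hsum
      · rintro ⟨y, ⟨hy1, hy2, hy3⟩, rfl⟩
        refine ⟨⟨⟨?_, ?_⟩, ?_⟩, ?_⟩
        · intro T hT
          beta_reduce
          exact_mod_cast hy1 T hT
        · intro T hT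
          beta_reduce
          exact_mod_cast hy2 T hT
        · intro i
          exact ⟨y i, rfl⟩
        · beta_reduce
          exact_mod_cast hy3
    constructor
    · rw [himg]
      exact (sliceU_finite k a U b n).image _
    · rw [himg, Set.ncard_image_of_injective _ hinj]
      exact hp n hn
end
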